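/- arXiv:2505.16713 — 4 statements merged into one kernel-verified Lean document; each statement's English description precedes it below -/
import Mathlib

section
/- Let π and ρ be two probability measures on a measurable space, and let f be a nonnegative measurable function with E_π[f] < ∞ and E_ρ[f] > 0. Then E_π[f]·log(E_π[f]/E_ρ[f]) ≤ Ent_π(f) + E_π[f]·log(1 + χ²(π‖ρ)), where Ent_π(f) = E_π[f log f] − E_π[f] log E_π[f] and χ²(π‖ρ) = ∫ (dπ/dρ)² dρ − 1. -/
open MeasureTheory

/-- `log x ≤ x/c - 1 + log c` for positive `x, c`. -/
lemma log_le_div_sub_one_add_log {x c : ℝ} (hx : 0 < x) (hc : 0 < c) :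
    Real.log x ≤ x / c - 1 + Real.log c := by
  have h := Real.log_le_sub_one_of_pos (show 0 < x / c by positivity)
  rw [Real.log_div hx.ne' hc.ne'] at h
  linarith

/-- Lemma of Chen–Chewi–Niles-Weed: for probability measures `π ≪ ρ` and a nonnegative
function `f` with `E_π[f] < ∞` and `E_ρ[f] > 0`,
`E_π[f]·log(E_π[f]/E_ρ[f]) ≤ Ent_π(f) + E_π[f]·log(1 + χ²(π‖ρ))`. -/
theorem entropy_chi_sq_bound {Ω : Type*} [MeasurableSpace Ω]
    (π ρ : Measure Ω) [IsProbabilityMeasure π] [IsProbabilityMeasure ρ]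
    (hac : π ≪ ρ)
    (f : Ω → ℝ) (hf : Measurable f) (hf0 : ∀ x, 0 ≤ f x)
    (hfπ : Integrable f π)
    (hflog : Integrable (fun x => f x * Real.log (f x)) π)
    (hrn : Integrable (fun x => ((π.rnDeriv ρ x).toReal) ^ 2) ρ)
    (hfρ : 0 < ∫ x, f x ∂ρ) :
    (∫ x, f x ∂π) * Real.log ((∫ x, f x ∂π) / (∫ x, f x ∂ρ)) ≤
      ((∫ x, f x * Real.log (f x) ∂π) - (∫ x, f x ∂π) * Real.log (∫ x, f x ∂π))
        + (∫ x, f x ∂π) * Real.log (1 + ((∫ x, ((π.rnDeriv ρ x).toReal) ^ 2 ∂ρ) - 1)) := by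
  set r : Ω → ℝ := fun x => (π.rnDeriv ρ x).toReal with hr_def
  have hrmeas : Measurable r := (Measure.measurable_rnDeriv π ρ).ennreal_toReal
  have hr0 : ∀ x, 0 ≤ r x := fun x => ENNReal.toReal_nonneg
  have hrpos : ∀ᵐ x ∂π, 0 < r x := by
    filter_upwards [Measure.rnDeriv_pos hac, hac.ae_le (Measure.rnDeriv_lt_top π ρ)] with x h1 h2
    exact ENNReal.toReal_pos h1.ne' h2.ne
  set m := ∫ x, f x ∂π with hm_def
  set B := ∫ x, f x ∂ρ with hB_def
  set C := ∫ x, r x ^ 2 ∂ρ with hC_def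
  have hfρ_int : Integrable f ρ := by
    by_contra h
    rw [hB_def, integral_undef h] at hfρ
    exact lt_irrefl 0 hfρ
  have hm0 : 0 ≤ m := integral_nonneg hf0
  rcases eq_or_lt_of_le hm0 with hm | hm
  · -- degenerate case: `m = 0`, so `f = 0` π-a.e.
    have hfae : f =ᵐ[π] 0 := by
      rw [← integral_eq_zero_iff_of_nonneg hf0 hfπ, ← hm_def, ← hm]
    have h1 : (∫ x, f x * Real.log (f x) ∂π) = 0 := by
      have : (fun x => f x * Real.log (f x)) =ᵐ[π] 0 := by
        filter_upwards [hfae] with x hx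
        simp [hx]
      rw [integral_congr_ae this]
      simp
    rw [← hm, h1]
    simp
  · -- main case: `m > 0`
    have hB : 0 < B := hfρ
    have hrint : Integrable r π := by
      refine (integrable_rnDeriv_smul_iff hac).mp ?_
      have : (fun x => (π.rnDeriv ρ x).toReal • r x) = fun x => r x ^ 2 := by
        funext x; simp [hr_def, sq, smul_eq_mul]
      rw [this]; exact hrn
    have hCeq : ∫ x, r x ∂π = C := by
      rw [hC_def, ← integral_rnDeriv_smul hac (f := r)]
      congr 1
      funext x; simp [hr_def, sq, smul_eq_mul]
    have hCpos : 0 < C := by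
      rw [← hCeq]
      rw [integral_pos_iff_support_of_nonneg_ae (Filter.Eventually.of_forall hr0) hrint]
      have hcompl : π (Function.support r)ᶜ = 0 := by
        refine measure_mono_null (fun x hx => ?_) hrpos
        simp only [Function.mem_support, Set.mem_compl_iff, not_not] at hx
        simp [hx]
      have hmeas : MeasurableSet (Function.support r) :=
        measurableSet_support hrmeas
      have := measure_compl hmeas (measure_ne_top π _)
      rw [hcompl, measure_univ] at this
      have h1 : (1 : ENNReal) ≤ π (Function.support r) :=
        tsub_eq_zero_iff_le.mp this.symm
      exact lt_of_lt_of_le one_pos h1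
    -- the function `f/r`
    have hgρint : Integrable (fun x => r x • (f x / r x)) ρ := by
      refine Integrable.mono hfρ_int ((hrmeas.mul (hf.div hrmeas)).aestronglyMeasurable) ?_
      refine Filter.Eventually.of_forall fun x => ?_
      by_cases hx : r x = 0
      · simp [hx, abs_nonneg]
      · rw [smul_eq_mul, mul_div_cancel₀ _ hx]
    have hgint : Integrable (fun x => f x / r x) π := by
      refine (integrable_rnDeriv_smul_iff hac).mp ?_
      exact hgρint
    have hgle : ∫ x, f x / r x ∂π ≤ B := by
      rw [← integral_rnDeriv_smul hac (f := fun x => f x / r x)]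
      refine integral_mono hgρint hfρ_int fun x => ?_
      by_cases hx : r x = 0
      · simp [hx, hf0 x]
      · rw [smul_eq_mul, mul_div_cancel₀ _ hx]
    set I := ∫ x, f x / r x ∂π with hI_def
    set L := Real.log C + Real.log B - Real.log m with hL_def
    -- pointwise inequality
    have hpt : ∀ᵐ x ∂π, f x * Real.log (m / f x) ≤
        m / C * r x + m / B * (f x / r x) - 2 * f x + f x * L := by
      filter_upwards [hrpos] with x hrx
      rcases eq_or_lt_of_le (hf0 x) with hfx | hfx
      · rw [← hfx]
        have : (0:ℝ) ≤ m / C * r x := by positivity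
        simpa using this
      · have h1 : Real.log (m * r x / f x) ≤ (m * r x / f x) / C - 1 + Real.log C :=
          log_le_div_sub_one_add_log (by positivity) hCpos
        have h2 : Real.log (1 / r x) ≤ (1 / r x) / (B / m) - 1 + Real.log (B / m) :=
          log_le_div_sub_one_add_log (by positivity) (by positivity)
        have hlog : Real.log (m / f x) = Real.log (m * r x / f x) + Real.log (1 / r x) := by
          rw [← Real.log_mul (by positivity) (by positivity)]
          congr 1
          field_simp
        have hBm : Real.log (B / m) = Real.log B - Real.log m :=
          Real.log_div hB.ne' hm.ne'
        have key : Real.log (m / f x) ≤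
            (m * r x / f x) / C + (1 / r x) / (B / m) - 2 + L := by
          rw [hlog, hL_def]; rw [hBm] at h2; linarith
        have hmul := mul_le_mul_of_nonneg_left key (hf0 x)
        have eA : f x * ((m * r x / f x) / C) = m / C * r x := by
          field_simp
        have eB : f x * ((1 / r x) / (B / m)) = m / B * (f x / r x) := by
          field_simp
        have expand : f x * ((m * r x / f x) / C + (1 / r x) / (B / m) - 2 + L)
            = f x * ((m * r x / f x) / C) + f x * ((1 / r x) / (B / m))
              - 2 * f x + f x * L := by ring
        rw [expand, eA, eB] at hmul
        exact hmul
    -- integrate the pointwise inequality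
    have hLHSfun : (fun x => f x * Real.log (m / f x))
        = fun x => f x * Real.log m - f x * Real.log (f x) := by
      funext x
      rcases eq_or_lt_of_le (hf0 x) with hfx | hfx
      · simp [← hfx]
      · rw [Real.log_div hm.ne' hfx.ne']
        ring
    have hLHSint : Integrable (fun x => f x * Real.log (m / f x)) π := by
      rw [hLHSfun]
      exact (hfπ.mul_const _).sub hflog
    have i1 : Integrable (fun x => m / C * r x) π := hrint.const_mul _
    have i2 : Integrable (fun x => m / B * (f x / r x)) π := hgint.const_mul _
    have i3 : Integrable (fun x => 2 * f x) π := hfπ.const_mul 2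
    have i4 : Integrable (fun x => f x * L) π := hfπ.mul_const _
    have i12 : Integrable (fun x => m / C * r x + m / B * (f x / r x)) π := i1.add i2
    have i123 : Integrable (fun x => m / C * r x + m / B * (f x / r x) - 2 * f x) π :=
      i12.sub i3
    have hRHSint : Integrable
        (fun x => m / C * r x + m / B * (f x / r x) - 2 * f x + f x * L) π := i123.add i4
    have hint := integral_mono_ae hLHSint hRHSint hpt
    have hLHSval : ∫ x, f x * Real.log (m / f x) ∂π
        = m * Real.log m - ∫ x, f x * Real.log (f x) ∂π := by
      rw [hLHSfun, integral_sub (hfπ.mul_const _) hflog, integral_mul_const, ← hm_def]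
    have hRHSval : ∫ x, (m / C * r x + m / B * (f x / r x) - 2 * f x + f x * L) ∂π
        = m / C * C + m / B * I - 2 * m + m * L := by
      rw [integral_add i123 i4, integral_sub i12 i3, integral_add i1 i2,
        integral_const_mul, integral_const_mul, integral_const_mul, integral_mul_const,
        hCeq, ← hI_def, ← hm_def]
    rw [hLHSval, hRHSval] at hint
    -- final arithmetic
    have e1 : m / C * C = m := by field_simp
    have e2 : m / B * I ≤ m := by
      calc m / B * I ≤ m / B * B := by
            exact mul_le_mul_of_nonneg_left hgle (by positivity)
        _ = m := by field_simp
    have e3 : Real.log (m / B) = Real.log m - Real.log B := Real.log_div hm.ne' hB.ne'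
    have e4 : (1 : ℝ) + (C - 1) = C := by ring
    have e5 : m * L = m * Real.log C + m * Real.log B - m * Real.log m := by
      rw [hL_def]; ring
    rw [e4, e3]
    nlinarith [hint, e1, e2, e5]
end

section
/- Let X have density proportional to exp(−U(x)) on ℝ^d with U even, let Y ∈ {±1} have conditional mass function p(y|x) = g(y⟨x, θ₁⟩), where g : ℝ → [0,1] satisfies g(t) + g(−t) = 1, and set Z = YX. Then Z and Y are independent, and the law of Z has density proportional to g(⟨z, θ₁⟩) exp(−U(z)). -/
open MeasureTheory ProbabilityTheory

/-- Zero-bias independence: if `X` has density proportional to `e^{−U}` with `U` even,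
and `Y ∈ {±1}` has conditional mass `p(y|x) = g(y⟨x,θ₁⟩)` with `g(t)+g(−t)=1`, then
`Z = Y X` is independent of `Y`, and `Z` has density proportional to
`g(⟨z,θ₁⟩) e^{−U(z)}`. -/
theorem zero_bias_independence {Ω : Type*} [MeasurableSpace Ω]
    (P : Measure Ω) [IsProbabilityMeasure P] {d : ℕ}
    (X : Ω → EuclideanSpace ℝ (Fin d)) (Y : Ω → ℝ)
    (hX : Measurable X) (hY : Measurable Y)
    (hYval : ∀ ω, Y ω = 1 ∨ Y ω = -1)
    (U : EuclideanSpace ℝ (Fin d) → ℝ) (hU : Measurable U)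
    (hU0 : ∀ x, 0 ≤ U x) (hUeven : ∀ x, U (-x) = U x)
    (hUint : Integrable (fun x => Real.exp (-(U x))))
    (g : ℝ → ℝ) (hg : Measurable g) (hg01 : ∀ t, 0 ≤ g t ∧ g t ≤ 1)
    (hgsum : ∀ t, g t + g (-t) = 1)
    (θ₁ : EuclideanSpace ℝ (Fin d))
    -- the joint law of `(X, Y)`: marginal density `e^{−U}/𝒵` and conditional
    -- mass `g(y⟨x,θ₁⟩)`
    (hlaw : ∀ y : ℝ, (y = 1 ∨ y = -1) → ∀ A : Set (EuclideanSpace ℝ (Fin d)),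
      MeasurableSet A →
      P {ω | Y ω = y ∧ X ω ∈ A}
        = ENNReal.ofReal
            ((∫ x in A, g (y * (inner ℝ x θ₁ : ℝ)) * Real.exp (-(U x)))
              / (∫ x, Real.exp (-(U x)))) ) :
    IndepFun (fun ω => Y ω • X ω) Y P ∧
      ∀ A : Set (EuclideanSpace ℝ (Fin d)), MeasurableSet A →
        Measure.map (fun ω => Y ω • X ω) P A
          = ENNReal.ofReal
              ((∫ z in A, g ((inner ℝ z θ₁ : ℝ)) * Real.exp (-(U z)))
                / (∫ z, g ((inner ℝ z θ₁ : ℝ)) * Real.exp (-(U z)))) := by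
  classical
  have hφ : Measurable (fun ω => Y ω • X ω) := hY.smul hX
  set c : ℝ := ∫ x, Real.exp (-(U x)) with hc
  have hc_pos : 0 < c := by
    rw [hc, integral_pos_iff_support_of_nonneg_ae
      (Filter.Eventually.of_forall fun x => (Real.exp_pos _).le) hUint]
    have hsupp : Function.support (fun x : EuclideanSpace ℝ (Fin d) => Real.exp (-(U x)))
        = Set.univ := by
      ext x; simp [Function.mem_support, (Real.exp_pos (-(U x))).ne']
    rw [hsupp]
    exact isOpen_univ.measure_pos _ Set.univ_nonempty
  have hinner : Measurable (fun x : EuclideanSpace ℝ (Fin d) => (inner ℝ x θ₁ : ℝ)) :=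
    (continuous_id.inner continuous_const).measurable
  have hmeasf : ∀ y : ℝ, Measurable
      (fun x : EuclideanSpace ℝ (Fin d) => g (y * (inner ℝ x θ₁ : ℝ)) * Real.exp (-(U x))) :=
    fun y => (hg.comp (measurable_const.mul hinner)).mul hU.neg.exp
  have hint : ∀ y : ℝ, Integrable
      (fun x : EuclideanSpace ℝ (Fin d) => g (y * (inner ℝ x θ₁ : ℝ)) * Real.exp (-(U x))) := by
    intro y
    refine hUint.mono' (hmeasf y).aestronglyMeasurable ?_
    filter_upwards with x
    rw [Real.norm_eq_abs, abs_mul, abs_of_nonneg (hg01 _).1,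
      abs_of_nonneg (Real.exp_pos _).le]
    calc g (y * (inner ℝ x θ₁ : ℝ)) * Real.exp (-(U x))
        ≤ 1 * Real.exp (-(U x)) :=
          mul_le_mul_of_nonneg_right (hg01 _).2 (Real.exp_pos _).le
      _ = Real.exp (-(U x)) := one_mul _
  have hint1 : Integrable
      (fun x : EuclideanSpace ℝ (Fin d) => g ((inner ℝ x θ₁ : ℝ)) * Real.exp (-(U x))) := by
    simpa using hint 1
  have hintneg : Integrable
      (fun x : EuclideanSpace ℝ (Fin d) => g (-(inner ℝ x θ₁ : ℝ)) * Real.exp (-(U x))) := by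
    simpa [neg_one_mul] using hint (-1)
  -- symmetry
  have hsym : ∀ s : Set (EuclideanSpace ℝ (Fin d)), MeasurableSet s →
      (∫ x in {x | -x ∈ s}, g (-(inner ℝ x θ₁ : ℝ)) * Real.exp (-(U x)))
        = ∫ z in s, g ((inner ℝ z θ₁ : ℝ)) * Real.exp (-(U z)) := by
    intro s hs
    have hs' : MeasurableSet {x : EuclideanSpace ℝ (Fin d) | -x ∈ s} :=
      measurable_neg hs
    calc (∫ x in {x | -x ∈ s}, g (-(inner ℝ x θ₁ : ℝ)) * Real.exp (-(U x)))
        = ∫ x, Set.indicator {x | -x ∈ s}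
            (fun x => g (-(inner ℝ x θ₁ : ℝ)) * Real.exp (-(U x))) x :=
          (integral_indicator hs').symm
      _ = ∫ x, Set.indicator s
            (fun z => g ((inner ℝ z θ₁ : ℝ)) * Real.exp (-(U z))) (-x) := by
          refine integral_congr_ae (Filter.Eventually.of_forall fun x => ?_)
          by_cases hx : -x ∈ s
          · simp only [Set.indicator_of_mem (show x ∈ {x | -x ∈ s} from hx),
              Set.indicator_of_mem hx, inner_neg_left, hUeven]
          · simp only [Set.indicator_of_notMem (show x ∉ {x | -x ∈ s} from hx),
              Set.indicator_of_notMem hx]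
      _ = ∫ x, Set.indicator s
            (fun z => g ((inner ℝ z θ₁ : ℝ)) * Real.exp (-(U z))) x :=
          integral_neg_eq_self _ _
      _ = ∫ z in s, g ((inner ℝ z θ₁ : ℝ)) * Real.exp (-(U z)) := integral_indicator hs
  set m : ℝ := ∫ z, g ((inner ℝ z θ₁ : ℝ)) * Real.exp (-(U z)) with hm
  have hmm : m + m = c := by
    have h1 : (∫ x, g (-(inner ℝ x θ₁ : ℝ)) * Real.exp (-(U x))) = m := by
      have := hsym Set.univ MeasurableSet.univ
      simpa [setIntegral_univ] using this
    rw [hm] at h1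
    rw [hm, hc]
    nth_rewrite 2 [← h1]
    rw [← integral_add hint1 hintneg]
    congr 1
    ext x
    rw [← add_mul, hgsum, one_mul]
  have hm_pos : 0 < m := by linarith
  have hInn : ∀ s : Set (EuclideanSpace ℝ (Fin d)), MeasurableSet s →
      0 ≤ ∫ z in s, g ((inner ℝ z θ₁ : ℝ)) * Real.exp (-(U z)) := fun s hs =>
    setIntegral_nonneg hs fun x _ => mul_nonneg (hg01 _).1 (Real.exp_pos _).le
  -- key computation for each value of Y
  have hK1 : ∀ s : Set (EuclideanSpace ℝ (Fin d)), MeasurableSet s →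
      P ((fun ω => Y ω • X ω) ⁻¹' s ∩ Y ⁻¹' {1})
        = ENNReal.ofReal ((∫ z in s, g ((inner ℝ z θ₁ : ℝ)) * Real.exp (-(U z))) / c) := by
    intro s hs
    have hset : (fun ω => Y ω • X ω) ⁻¹' s ∩ Y ⁻¹' {1} = {ω | Y ω = 1 ∧ X ω ∈ s} := by
      ext ω
      simp only [Set.mem_inter_iff, Set.mem_preimage, Set.mem_singleton_iff, Set.mem_setOf_eq]
      constructor
      · rintro ⟨h1, h2⟩; rw [h2, one_smul] at h1; exact ⟨h2, h1⟩
      · rintro ⟨h2, h1⟩; rw [h2, one_smul]; exact ⟨h1, rfl⟩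
    rw [hset, hlaw 1 (Or.inl rfl) s hs]
    simp [hc]
  have hKneg : ∀ s : Set (EuclideanSpace ℝ (Fin d)), MeasurableSet s →
      P ((fun ω => Y ω • X ω) ⁻¹' s ∩ Y ⁻¹' {-1})
        = ENNReal.ofReal ((∫ z in s, g ((inner ℝ z θ₁ : ℝ)) * Real.exp (-(U z))) / c) := by
    intro s hs
    have hs' : MeasurableSet {x : EuclideanSpace ℝ (Fin d) | -x ∈ s} :=
      measurable_neg hs
    have hset : (fun ω => Y ω • X ω) ⁻¹' s ∩ Y ⁻¹' {-1}
        = {ω | Y ω = -1 ∧ X ω ∈ {x | -x ∈ s}} := by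
      ext ω
      simp only [Set.mem_inter_iff, Set.mem_preimage, Set.mem_singleton_iff, Set.mem_setOf_eq]
      constructor
      · rintro ⟨h1, h2⟩; rw [h2, neg_one_smul] at h1; exact ⟨h2, h1⟩
      · rintro ⟨h2, h1⟩; rw [h2, neg_one_smul]; exact ⟨h1, rfl⟩
    rw [hset, hlaw (-1) (Or.inr rfl) _ hs']
    have hnum : (∫ x in {x : EuclideanSpace ℝ (Fin d) | -x ∈ s},
        g ((-1 : ℝ) * (inner ℝ x θ₁ : ℝ)) * Real.exp (-(U x)))
        = ∫ z in s, g ((inner ℝ z θ₁ : ℝ)) * Real.exp (-(U z)) := by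
      simp only [neg_one_mul]
      exact hsym s hs
    rw [hnum]
  -- partition by the value of Y
  have hdisj : Disjoint (Y ⁻¹' {1}) (Y ⁻¹' {(-1 : ℝ)}) := by
    rw [Set.disjoint_left]
    intro ω h1 h2
    simp only [Set.mem_preimage, Set.mem_singleton_iff] at h1 h2
    rw [h1] at h2; norm_num at h2
  have hY1m : MeasurableSet (Y ⁻¹' {(1 : ℝ)}) := hY (measurableSet_singleton _)
  have hYnm : MeasurableSet (Y ⁻¹' {(-1 : ℝ)}) := hY (measurableSet_singleton _)
  have hpart : ∀ W : Set Ω, MeasurableSet W → P W = P (W ∩ Y ⁻¹' {1}) + P (W ∩ Y ⁻¹' {-1}) := by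
    intro W hW
    have hu : W = (W ∩ Y ⁻¹' {1}) ∪ (W ∩ Y ⁻¹' {-1}) := by
      rw [← Set.inter_union_distrib_left]
      have : Y ⁻¹' {1} ∪ Y ⁻¹' {(-1 : ℝ)} = Set.univ := by
        ext ω
        simp only [Set.mem_union, Set.mem_preimage, Set.mem_singleton_iff, Set.mem_univ,
          iff_true]
        exact hYval ω
      rw [this, Set.inter_univ]
    nth_rewrite 1 [hu]
    exact measure_union (hdisj.mono Set.inter_subset_right Set.inter_subset_right)
      (hW.inter hYnm)
  -- marginals of Y
  have hYone : P (Y ⁻¹' {1}) = ENNReal.ofReal (m / c) := by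
    have h := hK1 Set.univ MeasurableSet.univ
    simpa [setIntegral_univ, ← hm] using h
  have hYneg : P (Y ⁻¹' {-1}) = ENNReal.ofReal (m / c) := by
    have h := hKneg Set.univ MeasurableSet.univ
    simpa [setIntegral_univ, ← hm] using h
  have hmc : m / c = 1 / 2 := by
    field_simp
    linarith
  -- the law of Z
  have hmap : ∀ s : Set (EuclideanSpace ℝ (Fin d)), MeasurableSet s →
      P ((fun ω => Y ω • X ω) ⁻¹' s)
        = ENNReal.ofReal ((∫ z in s, g ((inner ℝ z θ₁ : ℝ)) * Real.exp (-(U z))) / m) := by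
    intro s hs
    rw [hpart _ (hφ hs), hK1 s hs, hKneg s hs,
      ← ENNReal.ofReal_add (div_nonneg (hInn s hs) hc_pos.le)
        (div_nonneg (hInn s hs) hc_pos.le)]
    congr 1
    rw [← add_div, div_eq_div_iff hc_pos.ne' hm_pos.ne', ← hmm]
    ring
  constructor
  · rw [indepFun_iff_measure_inter_preimage_eq_mul]
    intro s t hs ht
    have hhalf : ENNReal.ofReal (m / c) = ENNReal.ofReal (1 / 2) := by rw [hmc]
    by_cases h1 : (1 : ℝ) ∈ t <;> by_cases h2 : (-1 : ℝ) ∈ t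
    · have hT : Y ⁻¹' t = Set.univ := by
        ext ω
        simp only [Set.mem_preimage, Set.mem_univ, iff_true]
        rcases hYval ω with h | h <;> rw [h] <;> assumption
      rw [hT, Set.inter_univ, measure_univ, mul_one]
    · have hT : Y ⁻¹' t = Y ⁻¹' {1} := by
        ext ω
        simp only [Set.mem_preimage, Set.mem_singleton_iff]
        constructor
        · intro h; rcases hYval ω with h' | h'
          · exact h'
          · rw [h'] at h; exact absurd h h2
        · intro h; rw [h]; exact h1
      rw [hT, hK1 s hs, hmap s hs, hYone, hmc,
        ← ENNReal.ofReal_mul (div_nonneg (hInn s hs) hm_pos.le)]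
      congr 1
      rw [div_mul_eq_mul_div, div_eq_div_iff hc_pos.ne' hm_pos.ne', ← hmm]
      ring
    · have hT : Y ⁻¹' t = Y ⁻¹' {-1} := by
        ext ω
        simp only [Set.mem_preimage, Set.mem_singleton_iff]
        constructor
        · intro h; rcases hYval ω with h' | h'
          · rw [h'] at h; exact absurd h h1
          · exact h'
        · intro h; rw [h]; exact h2
      rw [hT, hKneg s hs, hmap s hs, hYneg, hmc,
        ← ENNReal.ofReal_mul (div_nonneg (hInn s hs) hm_pos.le)]
      congr 1
      rw [div_mul_eq_mul_div, div_eq_div_iff hc_pos.ne' hm_pos.ne', ← hmm]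
      ring
    · have hT : Y ⁻¹' t = ∅ := by
        ext ω
        simp only [Set.mem_preimage, Set.mem_empty_iff_false, iff_false]
        intro h
        rcases hYval ω with h' | h' <;> rw [h'] at h
        · exact h1 h
        · exact h2 h
      rw [hT, Set.inter_empty, measure_empty, mul_zero]
  · intro A hA
    rw [Measure.map_apply hφ hA, hmap A hA, hm]
end

section
/- In the setting where U is even, g = σ is the logistic link, and 𝒵_{−θ₀} = ∫ σ(⟨z,θ₁⟩ − θ₀)e^{−U(z)}dz with θ₀ ≥ 0, one has (e^{−θ₀}/2)·𝒵 ≤ 𝒵_{−θ₀} ≤ e^{−θ₀}·𝒵·M_X(θ₁), where M_X(t) = 𝒵^{−1}∫ e^{⟨x,t⟩} e^{−U(x)} dx is the moment generating function of X. -/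
open MeasureTheory

lemma sigma_add (t : ℝ) :
    1 / (1 + Real.exp (-t)) + 1 / (1 + Real.exp t) = 1 := by
  have h1 : (0:ℝ) < 1 + Real.exp (-t) := by positivity
  have h2 : (0:ℝ) < 1 + Real.exp t := by positivity
  have h3 : Real.exp t * Real.exp (-t) = 1 := by
    rw [← Real.exp_add]; simp
  field_simp
  ring_nf
  nlinarith [h3]

lemma sigma_shift_ge (t θ₀ : ℝ) (hθ₀ : 0 ≤ θ₀) :
    Real.exp (-θ₀) * (1 / (1 + Real.exp (-t))) ≤ 1 / (1 + Real.exp (-(t - θ₀))) := by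
  have h1 : (0:ℝ) < 1 + Real.exp (-t) := by positivity
  have h2 : (0:ℝ) < 1 + Real.exp (-(t - θ₀)) := by positivity
  have he : (1:ℝ) ≤ Real.exp θ₀ := Real.one_le_exp hθ₀
  have h3 : Real.exp (-θ₀) * Real.exp (-(t - θ₀)) = Real.exp (-θ₀) * Real.exp θ₀ * Real.exp (-t) := by
    simp only [← Real.exp_add]; congr 1; ring
  have h4 : Real.exp (-θ₀) * Real.exp θ₀ = 1 := by rw [← Real.exp_add]; simp
  have h5 : Real.exp (-θ₀) ≤ 1 := Real.exp_le_one_iff.mpr (by linarith)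
  rw [mul_one_div, div_le_div_iff₀ h1 h2]
  nlinarith [Real.exp_pos (-t), Real.exp_pos (-(t - θ₀))]

lemma sigma_le_exp (t : ℝ) : 1 / (1 + Real.exp (-t)) ≤ Real.exp t := by
  have h1 : (0:ℝ) < 1 + Real.exp (-t) := by positivity
  rw [div_le_iff₀ h1]
  have h3 : Real.exp t * Real.exp (-t) = 1 := by rw [← Real.exp_add]; simp
  nlinarith [Real.exp_pos t]

/-- For an even potential `U` and the logistic link `σ`, the partial normalizer
`𝒵_{−θ₀} = ∫ σ(⟨z,θ₁⟩ − θ₀)e^{−U(z)}dz` with `θ₀ ≥ 0` satisfies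
`(e^{−θ₀}/2)𝒵 ≤ 𝒵_{−θ₀} ≤ e^{−θ₀}·𝒵·M_X(θ₁)`, where
`M_X(θ₁) = 𝒵^{−1}∫ e^{⟨x,θ₁⟩}e^{−U(x)}dx`. -/
theorem logistic_partial_normalizer_bounds {d : ℕ}
    (U : EuclideanSpace ℝ (Fin d) → ℝ) (hU : Measurable U)
    (hU0 : ∀ x, 0 ≤ U x) (hUeven : ∀ x, U (-x) = U x)
    (hUint : Integrable (fun x => Real.exp (-(U x))))
    (hZpos : 0 < ∫ x, Real.exp (-(U x)))
    (θ₁ : EuclideanSpace ℝ (Fin d)) (θ₀ : ℝ) (hθ₀ : 0 ≤ θ₀)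
    (hmgf : Integrable (fun x => Real.exp ((inner ℝ x θ₁ : ℝ)) * Real.exp (-(U x))))
    (hintm : Integrable (fun z =>
      (1 / (1 + Real.exp (-((inner ℝ z θ₁ : ℝ) - θ₀)))) * Real.exp (-(U z)))) :
    (Real.exp (-θ₀) / 2) * (∫ x, Real.exp (-(U x)))
        ≤ ∫ z, (1 / (1 + Real.exp (-((inner ℝ z θ₁ : ℝ) - θ₀)))) * Real.exp (-(U z)) ∧
      ∫ z, (1 / (1 + Real.exp (-((inner ℝ z θ₁ : ℝ) - θ₀)))) * Real.exp (-(U z))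
        ≤ Real.exp (-θ₀) * (∫ x, Real.exp (-(U x))) *
            ((∫ x, Real.exp ((inner ℝ x θ₁ : ℝ)) * Real.exp (-(U x)))
              / (∫ x, Real.exp (-(U x)))) := by
  have hZne : (∫ x, Real.exp (-(U x))) ≠ 0 := ne_of_gt hZpos
  -- continuity/measurability helpers
  have hcont : Continuous fun z : EuclideanSpace ℝ (Fin d) => (inner ℝ z θ₁ : ℝ) :=
    continuous_inner.comp (continuous_id.prodMk continuous_const)
  have hmeasU : AEStronglyMeasurable (fun x => Real.exp (-(U x))) volume :=
    (hU.neg.exp).aestronglyMeasurable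
  -- integrability of σ(⟨z,θ₁⟩) e^{-U}
  have hintσ : Integrable (fun z =>
      (1 / (1 + Real.exp (-(inner ℝ z θ₁ : ℝ)))) * Real.exp (-(U z))) := by
    apply hUint.mono
    · exact ((continuous_const.div (by continuity) (fun z => by positivity)).aestronglyMeasurable.mul hmeasU)
    · filter_upwards with z
      have h1 : (0:ℝ) < 1 + Real.exp (-(inner ℝ z θ₁ : ℝ)) := by positivity
      have hle : 1 / (1 + Real.exp (-(inner ℝ z θ₁ : ℝ))) ≤ 1 := by
        rw [div_le_one h1]; nlinarith [Real.exp_pos (-(inner ℝ z θ₁ : ℝ))]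
      have hge : 0 ≤ 1 / (1 + Real.exp (-(inner ℝ z θ₁ : ℝ))) := by positivity
      simp only [Real.norm_eq_abs, abs_mul, abs_of_nonneg hge,
        abs_of_nonneg (Real.exp_pos _).le]
      nlinarith [Real.exp_pos (-(U z))]
  have hintσ' : Integrable (fun z =>
      (1 / (1 + Real.exp ((inner ℝ z θ₁ : ℝ)))) * Real.exp (-(U z))) := by
    apply hUint.mono
    · exact ((continuous_const.div (by continuity) (fun z => by positivity)).aestronglyMeasurable.mul hmeasU)
    · filter_upwards with z
      have h1 : (0:ℝ) < 1 + Real.exp ((inner ℝ z θ₁ : ℝ)) := by positivity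
      have hle : 1 / (1 + Real.exp ((inner ℝ z θ₁ : ℝ))) ≤ 1 := by
        rw [div_le_one h1]; nlinarith [Real.exp_pos ((inner ℝ z θ₁ : ℝ))]
      have hge : 0 ≤ 1 / (1 + Real.exp ((inner ℝ z θ₁ : ℝ))) := by positivity
      simp only [Real.norm_eq_abs, abs_mul, abs_of_nonneg hge,
        abs_of_nonneg (Real.exp_pos _).le]
      nlinarith [Real.exp_pos (-(U z))]
  -- symmetrization: ∫ σ(⟨z,θ₁⟩) e^{-U} = Z/2
  have hsym : (∫ z, (1 / (1 + Real.exp (-(inner ℝ z θ₁ : ℝ)))) * Real.exp (-(U z)))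
      = (∫ x, Real.exp (-(U x))) / 2 := by
    have hneg : (∫ z, (1 / (1 + Real.exp ((inner ℝ z θ₁ : ℝ)))) * Real.exp (-(U z)))
        = ∫ z, (1 / (1 + Real.exp (-(inner ℝ z θ₁ : ℝ)))) * Real.exp (-(U z)) := by
      rw [← integral_neg_eq_self (fun z =>
        (1 / (1 + Real.exp (-(inner ℝ z θ₁ : ℝ)))) * Real.exp (-(U z))) volume]
      congr 1; funext z
      rw [hUeven]
      congr 3
      simp [inner_neg_left]
    have hsum : (∫ z, (1 / (1 + Real.exp (-(inner ℝ z θ₁ : ℝ)))) * Real.exp (-(U z)))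
        + (∫ z, (1 / (1 + Real.exp ((inner ℝ z θ₁ : ℝ)))) * Real.exp (-(U z)))
        = ∫ x, Real.exp (-(U x)) := by
      rw [← integral_add hintσ hintσ']
      congr 1; funext z
      rw [← add_mul, sigma_add, one_mul]
    rw [hneg] at hsum
    linarith
  constructor
  · -- lower bound
    have hmono : (∫ z, Real.exp (-θ₀) * ((1 / (1 + Real.exp (-(inner ℝ z θ₁ : ℝ)))) * Real.exp (-(U z))))
        ≤ ∫ z, (1 / (1 + Real.exp (-((inner ℝ z θ₁ : ℝ) - θ₀)))) * Real.exp (-(U z)) := by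
      apply integral_mono (hintσ.const_mul _) hintm
      intro z
      have := sigma_shift_ge (inner ℝ z θ₁ : ℝ) θ₀ hθ₀
      have hexp : (0:ℝ) ≤ Real.exp (-(U z)) := (Real.exp_pos _).le
      calc Real.exp (-θ₀) * ((1 / (1 + Real.exp (-(inner ℝ z θ₁ : ℝ)))) * Real.exp (-(U z)))
          = (Real.exp (-θ₀) * (1 / (1 + Real.exp (-(inner ℝ z θ₁ : ℝ))))) * Real.exp (-(U z)) := by ring
        _ ≤ _ := mul_le_mul_of_nonneg_right this hexp
    rw [integral_const_mul, hsym] at hmono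
    linarith [hmono]
  · -- upper bound
    have hrhs : Real.exp (-θ₀) * (∫ x, Real.exp (-(U x))) *
            ((∫ x, Real.exp ((inner ℝ x θ₁ : ℝ)) * Real.exp (-(U x)))
              / (∫ x, Real.exp (-(U x))))
        = Real.exp (-θ₀) * (∫ x, Real.exp ((inner ℝ x θ₁ : ℝ)) * Real.exp (-(U x))) := by
      field_simp
    rw [hrhs]
    have hmono : (∫ z, (1 / (1 + Real.exp (-((inner ℝ z θ₁ : ℝ) - θ₀)))) * Real.exp (-(U z)))
        ≤ ∫ z, Real.exp (-θ₀) * (Real.exp ((inner ℝ z θ₁ : ℝ)) * Real.exp (-(U z))) := by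
      apply integral_mono hintm (hmgf.const_mul _)
      intro z
      have h := sigma_le_exp ((inner ℝ z θ₁ : ℝ) - θ₀)
      have hexp : (0:ℝ) ≤ Real.exp (-(U z)) := (Real.exp_pos _).le
      have heq : Real.exp ((inner ℝ z θ₁ : ℝ) - θ₀) = Real.exp (-θ₀) * Real.exp ((inner ℝ z θ₁ : ℝ)) := by
        rw [← Real.exp_add]; ring_nf
      calc (1 / (1 + Real.exp (-((inner ℝ z θ₁ : ℝ) - θ₀)))) * Real.exp (-(U z))
          ≤ Real.exp ((inner ℝ z θ₁ : ℝ) - θ₀) * Real.exp (-(U z)) :=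
            mul_le_mul_of_nonneg_right h hexp
        _ = Real.exp (-θ₀) * (Real.exp ((inner ℝ z θ₁ : ℝ)) * Real.exp (-(U z))) := by
            rw [heq]; ring
    rw [integral_const_mul] at hmono
    linarith
end

section
/- Let μ be a probability measure on a space where functions f in an algebra 𝒜 satisfy the log-Sobolev inequality Ent_μ(f²) ≤ 2C E_μ[Γ(f)] for a carré du champ Γ and constant C > 0. Then for any f ∈ 𝒜 with Γ(f) ≤ σ² pointwise and any t ≥ 0, μ(f − E_μ[f] ≥ t) ≤ exp(−t²/(2Cσ²)). -/
open MeasureTheory Real Filter Topology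

section HerbstAux

variable {α : Type*} [MeasurableSpace α] {μ : Measure α} [IsProbabilityMeasure μ]

private lemma herbst_exp_sub_one_le (s : ℝ) : Real.exp s - 1 ≤ s * Real.exp s := by
  have h1 := Real.add_one_le_exp (-s)
  have h2 : Real.exp (-s) * Real.exp s = 1 := by rw [← Real.exp_add]; simp
  nlinarith [Real.exp_pos s]

private lemma herbst_exp_neg_upper {s : ℝ} (hs : 0 ≤ s) : Real.exp (-s) ≤ 1 - s + s ^ 2 := by
  have h1 : s + 1 ≤ Real.exp s := Real.add_one_le_exp s
  have h2 : Real.exp (-s) * Real.exp s = 1 := by rw [← Real.exp_add]; simp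
  nlinarith [Real.exp_pos s, Real.exp_pos (-s), sq_nonneg s]

private lemma herbst_mul_exp_neg_le {x w : ℝ} (hx : 0 ≤ x) (hw : 0 < w) :
    x * Real.exp (-(w * x)) ≤ 1 / w := by
  have h1 : w * x ≤ Real.exp (w * x) := by nlinarith [Real.add_one_le_exp (w * x)]
  have h2 : Real.exp (-(w * x)) * Real.exp (w * x) = 1 := by rw [← Real.exp_add]; simp
  have h3 : Real.exp (-(w*x)) ≤ 1 / Real.exp (w*x) := by
    rw [le_div_iff₀ (Real.exp_pos _)]; nlinarith
  calc x * Real.exp (-(w * x)) ≤ x * (1 / Real.exp (w*x)) := by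
        apply mul_le_mul_of_nonneg_left h3 hx
    _ ≤ 1 / w := by
        rw [mul_one_div, div_le_div_iff₀ (Real.exp_pos _) hw]
        nlinarith

private lemma sq_herbst_mul_exp_neg_le {x w : ℝ} (hx : 0 ≤ x) (hw : 0 < w) :
    x ^ 2 * Real.exp (-(w * x)) ≤ 4 / w ^ 2 := by
  have h1 : w * x / 2 ≤ Real.exp (w * x / 2) := by nlinarith [Real.add_one_le_exp (w * x / 2)]
  have h2 : Real.exp (w*x/2) * Real.exp (w*x/2) = Real.exp (w*x) := by
    rw [← Real.exp_add]; ring_nf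
  have h3 : (w*x/2)^2 ≤ Real.exp (w*x) := by nlinarith [Real.exp_pos (w*x/2), mul_nonneg hw.le hx]
  have h4 : Real.exp (-(w * x)) * Real.exp (w * x) = 1 := by rw [← Real.exp_add]; simp
  have h6 : 0 < Real.exp (-(w*x)) := Real.exp_pos _
  have h7 : (w*x/2)^2 * Real.exp (-(w*x)) ≤ 1 := by
    calc (w*x/2)^2 * Real.exp (-(w*x)) ≤ Real.exp (w*x) * Real.exp (-(w*x)) :=
          mul_le_mul_of_nonneg_right h3 h6.le
      _ = 1 := by rw [mul_comm]; exact h4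
  have hw2 : 0 < w^2 := by positivity
  rw [div_eq_inv_mul, inv_mul_eq_div, le_div_iff₀ hw2]
  nlinarith

private lemma herbst_integral_exp_pos {g : α → ℝ} (hg : Integrable (fun x => Real.exp (g x)) μ) :
    0 < ∫ x, Real.exp (g x) ∂μ := by
  rw [integral_pos_iff_support_of_nonneg (fun x => (Real.exp_pos _).le) hg]
  have : Function.support (fun x => Real.exp (g x)) = Set.univ :=
    Set.eq_univ_of_forall (fun x => (Real.exp_pos _).ne')
  rw [this]; simp


/-- Generic step of Herbst's argument, in cleared (division-free) form. -/
private lemma herbst_tilt_step (ψ : α → ℝ) {u v B : ℝ} (hv : 0 < v) (hvu : v < u)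
    (h1 : Integrable (fun x => Real.exp (u * ψ x)) μ)
    (h2 : Integrable (fun x => Real.exp (v * ψ x)) μ)
    (h3 : Integrable (fun x => ψ x * Real.exp (u * ψ x)) μ)
    (hEnt : u * (∫ x, ψ x * Real.exp (u * ψ x) ∂μ)
        - (∫ x, Real.exp (u * ψ x) ∂μ) * Real.log (∫ x, Real.exp (u * ψ x) ∂μ) ≤ B) :
    v * ((∫ x, Real.exp (u * ψ x) ∂μ) * Real.log (∫ x, Real.exp (u * ψ x) ∂μ))
      ≤ u * ((∫ x, Real.exp (u * ψ x) ∂μ) * Real.log (∫ x, Real.exp (v * ψ x) ∂μ))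
        + (u - v) * B := by
  set A := ∫ x, Real.exp (u * ψ x) ∂μ with hA_def
  set Bv := ∫ x, Real.exp (v * ψ x) ∂μ with hBv_def
  set I := ∫ x, ψ x * Real.exp (u * ψ x) ∂μ with hI_def
  have hA : 0 < A := herbst_integral_exp_pos h1
  have hBv : 0 < Bv := herbst_integral_exp_pos h2
  set θ := (v - u) * I / A with hθ_def
  -- pointwise inequality
  have key : ∀ x, Real.exp θ * Real.exp (u * ψ x)
      + ((v - u) * ψ x - θ) * (Real.exp θ * Real.exp (u * ψ x)) ≤ Real.exp (v * ψ x) := by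
    intro x
    have h := Real.add_one_le_exp ((v - u) * ψ x - θ)
    have hpos : (0:ℝ) < Real.exp θ * Real.exp (u * ψ x) := by positivity
    have := mul_le_mul_of_nonneg_left h hpos.le
    calc Real.exp θ * Real.exp (u * ψ x) + ((v - u) * ψ x - θ) * (Real.exp θ * Real.exp (u * ψ x))
        = Real.exp θ * Real.exp (u * ψ x) * ((v - u) * ψ x - θ + 1) := by ring
      _ ≤ Real.exp θ * Real.exp (u * ψ x) * Real.exp ((v - u) * ψ x - θ) := this
      _ = Real.exp (v * ψ x) := by
          rw [← Real.exp_add, ← Real.exp_add]; congr 1; ring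
  -- integrate
  have hlhs_int : Integrable (fun x => Real.exp θ * Real.exp (u * ψ x)
      + ((v - u) * ψ x - θ) * (Real.exp θ * Real.exp (u * ψ x))) μ := by
    have e1 : Integrable (fun x => Real.exp θ * Real.exp (u * ψ x)) μ := h1.const_mul _
    have e2 : Integrable (fun x => ((v - u) * Real.exp θ) * (ψ x * Real.exp (u * ψ x))) μ :=
      h3.const_mul _
    have e3 : Integrable (fun x => (θ * Real.exp θ) * Real.exp (u * ψ x)) μ := h1.const_mul _
    have i23 : Integrable (fun x => (v - u) * Real.exp θ * (ψ x * Real.exp (u * ψ x))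
        - θ * Real.exp θ * Real.exp (u * ψ x)) μ := e2.sub e3
    have : Integrable (fun x => Real.exp θ * Real.exp (u * ψ x)
        + ((v - u) * Real.exp θ * (ψ x * Real.exp (u * ψ x))
          - θ * Real.exp θ * Real.exp (u * ψ x))) μ := e1.add i23
    apply this.congr
    filter_upwards with x
    ring
  have hint := integral_mono hlhs_int h2 key
  have hcomp : ∫ x, (Real.exp θ * Real.exp (u * ψ x)
      + ((v - u) * ψ x - θ) * (Real.exp θ * Real.exp (u * ψ x))) ∂μ
      = Real.exp θ * A + ((v-u) * Real.exp θ) * I - (θ * Real.exp θ) * A := by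
    have e1 : (fun x => Real.exp θ * Real.exp (u * ψ x)
      + ((v - u) * ψ x - θ) * (Real.exp θ * Real.exp (u * ψ x)))
      = fun x => Real.exp θ * Real.exp (u * ψ x)
        + (((v - u) * Real.exp θ) * (ψ x * Real.exp (u * ψ x))
          - (θ * Real.exp θ) * Real.exp (u * ψ x)) := by
      funext x; ring
    have i2 : Integrable (fun x => (v - u) * Real.exp θ * (ψ x * Real.exp (u * ψ x))) μ :=
      h3.const_mul _
    have i3 : Integrable (fun x => θ * Real.exp θ * Real.exp (u * ψ x)) μ := h1.const_mul _
    have i23 : Integrable (fun x => (v - u) * Real.exp θ * (ψ x * Real.exp (u * ψ x))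
        - θ * Real.exp θ * Real.exp (u * ψ x)) μ := i2.sub i3
    rw [e1, integral_add (h1.const_mul _) i23, integral_sub i2 i3,
      integral_const_mul, integral_const_mul, integral_const_mul]
    ring
  rw [hcomp] at hint
  -- θ * A = (v-u) * I
  have hθA : θ * A = (v - u) * I := by
    rw [hθ_def]; field_simp
  have hexpA : Real.exp θ * A ≤ Bv := by nlinarith [Real.exp_pos θ]
  have hlog : θ + Real.log A ≤ Real.log Bv := by
    have h := Real.log_le_log (by positivity) hexpA
    rwa [Real.log_mul (Real.exp_ne_zero _) (ne_of_gt hA), Real.log_exp] at h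
  -- cleared form: A * log A - A * log Bv ≤ (u - v) * I
  have h6 : A * Real.log A - A * Real.log Bv ≤ (u - v) * I := by
    have := mul_le_mul_of_nonneg_left (sub_nonneg.mpr hlog) hA.le
    -- 0 ≤ A * (log Bv - θ - log A)
    have hθA' : A * θ = (v - u) * I := by rw [mul_comm]; exact hθA
    nlinarith
  have hu : 0 < u := hv.trans hvu
  have h7 : u * (A * Real.log A - A * Real.log Bv) ≤ u * ((u - v) * I) :=
    mul_le_mul_of_nonneg_left h6 hu.le
  have h8 : (u - v) * (u * I) ≤ (u - v) * (A * Real.log A + B) := by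
    apply mul_le_mul_of_nonneg_left _ (by linarith)
    linarith
  nlinarith

private lemma herbst_fexp_int (f : α → ℝ) (hfmeas : Measurable f) (hfint : Integrable f μ)
    {u : ℝ} (hu : 0 < u) (hint1 : Integrable (fun x => Real.exp ((u+1) * f x)) μ) :
    Integrable (fun x => f x * Real.exp (u * f x)) μ := by
  apply Integrable.mono' (hfint.abs.add hint1)
  · exact (hfmeas.mul ((hfmeas.const_mul u).exp)).aestronglyMeasurable
  · filter_upwards with x
    rw [Real.norm_eq_abs, abs_mul, abs_of_pos (Real.exp_pos _)]
    rcases le_or_gt 0 (f x) with hx | hx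
    · have h1 : |f x| ≤ Real.exp (f x) := by
        rw [abs_of_nonneg hx]; nlinarith [Real.add_one_le_exp (f x)]
      calc |f x| * Real.exp (u * f x) ≤ Real.exp (f x) * Real.exp (u * f x) :=
            mul_le_mul_of_nonneg_right h1 (Real.exp_pos _).le
        _ = Real.exp ((u+1) * f x) := by rw [← Real.exp_add]; congr 1; ring
        _ ≤ |f x| + Real.exp ((u+1) * f x) := by linarith [abs_nonneg (f x)]
    · have h1 : Real.exp (u * f x) ≤ 1 := by
        apply Real.exp_le_one_iff.mpr; nlinarith
      calc |f x| * Real.exp (u * f x) ≤ |f x| * 1 :=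
            mul_le_mul_of_nonneg_left h1 (abs_nonneg _)
        _ ≤ |f x| + Real.exp ((u+1) * f x) := by
            rw [mul_one]; linarith [(Real.exp_pos ((u+1) * f x)).le]

/-- Herbst's iteration: from the entropy bound to the mgf bound. -/
private lemma herbst_moment (f : α → ℝ) (hfmeas : Measurable f) (hfint : Integrable f μ)
    {c : ℝ} (hc : 0 < c)
    (hint : ∀ u : ℝ, 0 < u → Integrable (fun x => Real.exp (u * f x)) μ)
    (hent : ∀ u : ℝ, 0 < u →
      u * (∫ x, f x * Real.exp (u * f x) ∂μ)
        - (∫ x, Real.exp (u * f x) ∂μ) * Real.log (∫ x, Real.exp (u * f x) ∂μ)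
      ≤ c * u ^ 2 * (∫ x, Real.exp (u * f x) ∂μ)) :
    ∀ u : ℝ, 0 < u →
      ∫ x, Real.exp (u * f x) ∂μ ≤ Real.exp (u * (∫ x, f x ∂μ) + c * u ^ 2) := by
  set H : ℝ → ℝ := fun s => ∫ x, Real.exp (s * f x) ∂μ with hH
  set ρ : ℝ → ℝ := fun s => Real.log (H s) / s - c * s with hρ
  have hHpos : ∀ s : ℝ, 0 < s → 0 < H s := fun s hs => herbst_integral_exp_pos (hint s hs)
  -- single step
  have step : ∀ v u : ℝ, 0 < v → v < u → ρ u ≤ ρ v + c * (u - v) ^ 2 / v := by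
    intro v u hv hvu
    have hu : 0 < u := hv.trans hvu
    have hcl := herbst_tilt_step f hv hvu (hint u hu) (hint v hv)
      (herbst_fexp_int f hfmeas hfint hu (hint (u+1) (by linarith))) (hent u hu)
    have hAu : 0 < H u := hHpos u hu
    have hstep' : v * Real.log (H u) ≤ u * Real.log (H v) + (u - v) * (c * u ^ 2) := by
      have h1 : (H u) * (v * Real.log (H u)) ≤
          (H u) * (u * Real.log (H v) + (u - v) * (c * u ^ 2)) := by
        nlinarith [hcl]
      exact le_of_mul_le_mul_left (by linarith [h1]) hAu
    have expand : ρ v + c * (u - v) ^ 2 / v - ρ u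
        = (u * Real.log (H v) + (u - v) * (c * u ^ 2) - v * Real.log (H u)) / (u * v) := by
      rw [hρ]
      field_simp
      ring
    have : 0 ≤ ρ v + c * (u - v) ^ 2 / v - ρ u := by
      rw [expand]
      apply div_nonneg (by linarith) (by positivity)
    linarith
  -- telescoping: ρ u ≤ ρ a for all 0 < a < u
  have tel : ∀ a u : ℝ, 0 < a → a < u → ρ u ≤ ρ a := by
    intro a u ha hau
    have hu : 0 < u := ha.trans hau
    apply le_of_forall_pos_le_add
    intro ε hε
    obtain ⟨n, hn⟩ := exists_nat_gt (c * (u - a) ^ 2 / (a * ε))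
    have hn0 : 0 < n := by
      by_contra h
      push_neg at h
      interval_cases n
      simp only [Nat.cast_zero] at hn
      have : 0 ≤ c * (u - a) ^ 2 / (a * ε) := by positivity
      linarith
    have hnR : (0:ℝ) < n := by exact_mod_cast hn0
    set h : ℝ := (u - a) / n with hh
    have hhpos : 0 < h := by apply div_pos (by linarith) hnR
    have aux : ∀ k : ℕ, k ≤ n → ρ (a + k * h) ≤ ρ a + k * (c * h ^ 2 / a) := by
      intro k
      induction k with
      | zero => intro _; simp
      | succ k ih =>
        intro hk
        have hk' : k ≤ n := by omega
        have ihk := ih hk'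
        have hv : 0 < a + k * h := by positivity
        have hvu : a + k * h < a + (k + 1 : ℕ) * h := by
          push_cast
          nlinarith
        have hst := step (a + k * h) (a + (k+1 : ℕ) * h) hv hvu
        have heq : (a + ((k:ℕ)+1 : ℕ) * h - (a + k * h)) = h := by push_cast; ring
        rw [heq] at hst
        have hmono : c * h ^ 2 / (a + k * h) ≤ c * h ^ 2 / a := by
          apply div_le_div_of_nonneg_left (by positivity) ha
          nlinarith
        calc ρ (a + (k+1:ℕ) * h) ≤ ρ (a + k * h) + c * h ^ 2 / (a + k * h) := hst
          _ ≤ ρ a + k * (c * h ^ 2 / a) + c * h ^ 2 / a := by linarith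
          _ = ρ a + (k+1:ℕ) * (c * h ^ 2 / a) := by push_cast; ring
    have hfin := aux n le_rfl
    have hend : a + n * h = u := by
      rw [hh]
      field_simp
      ring
    rw [hend] at hfin
    have hbound : (n:ℝ) * (c * h ^ 2 / a) ≤ ε := by
      rw [hh]
      rw [div_lt_iff₀ (by positivity)] at hn
      have h2 : (n:ℝ) * (c * ((u - a)/n) ^ 2 / a) = c * (u-a)^2 / (n * a) := by
        field_simp
      rw [h2]
      rw [div_le_iff₀ (by positivity)]
      nlinarith
    exact hfin.trans (by linarith)
  -- the anchor: ρ u ≤ ∫ f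
  intro u hu
  have hanchor : ρ u ≤ ∫ x, f x ∂μ := by
    set a : ℕ → ℝ := fun m => u / (m + 2) with ha
    have hapos : ∀ m : ℕ, 0 < a m := by
      intro m; apply div_pos hu; positivity
    have halt : ∀ m : ℕ, a m < u := by
      intro m
      rw [ha, div_lt_iff₀ (by positivity)]
      nlinarith [Nat.cast_nonneg (α := ℝ) m]
    set D : ℕ → ℝ := fun m => ∫ x, (Real.exp (a m * f x) - 1) / a m ∂μ with hD
    have hDeq : ∀ m, D m = (H (a m) - 1) / a m := by
      intro m
      rw [hD]
      simp only []
      rw [integral_div, integral_sub (hint (a m) (hapos m)) (integrable_const 1),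
        integral_const]
      simp [hH]
    have hρD : ∀ m, ρ u ≤ D m := by
      intro m
      have h1 : ρ u ≤ ρ (a m) := tel (a m) u (hapos m) (halt m)
      have h2 : Real.log (H (a m)) ≤ H (a m) - 1 :=
        Real.log_le_sub_one_of_pos (hHpos _ (hapos m))
      have h3 : ρ (a m) ≤ (H (a m) - 1) / (a m) := by
        have hdiv : Real.log (H (a m)) / a m ≤ (H (a m) - 1) / a m :=
          (div_le_div_iff_of_pos_right (hapos m)).mpr h2
        have : 0 < c * a m := mul_pos hc (hapos m)
        rw [hρ]
        simp only []
        linarith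
      rw [← hDeq m] at h3
      linarith
    -- dominated convergence
    have hDlim : Tendsto D atTop (𝓝 (∫ x, f x ∂μ)) := by
      rw [hD]
      apply tendsto_integral_of_dominated_convergence
        (bound := fun x => |f x| + 1 + Real.exp ((u+1) * f x))
      · intro m
        exact ((((hfmeas.const_mul _).exp.sub measurable_const).div_const _)).aestronglyMeasurable
      · exact (hfint.abs.add (integrable_const 1)).add (hint (u+1) (by linarith))
      · intro m
        filter_upwards with x
        have hs := Real.add_one_le_exp (a m * f x)
        have hs2 := herbst_exp_sub_one_le (a m * f x)
        have hlow : f x ≤ (Real.exp (a m * f x) - 1) / a m := by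
          rw [le_div_iff₀ (hapos m)]
          nlinarith
        have hup : (Real.exp (a m * f x) - 1) / a m ≤ f x * Real.exp (a m * f x) := by
          rw [div_le_iff₀ (hapos m)]
          nlinarith
        rw [Real.norm_eq_abs]
        rcases le_or_gt 0 (f x) with hx | hx
        · have ham : a m ≤ u := (halt m).le
          have h5 : Real.exp (a m * f x) ≤ Real.exp (u * f x) := by
            apply Real.exp_le_exp.mpr
            nlinarith
          have h6 : f x ≤ Real.exp (f x) := by nlinarith [Real.add_one_le_exp (f x)]
          have h7 : f x * Real.exp (a m * f x) ≤ Real.exp ((u + 1) * f x) := by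
            calc f x * Real.exp (a m * f x) ≤ f x * Real.exp (u * f x) :=
                  mul_le_mul_of_nonneg_left h5 hx
              _ ≤ Real.exp (f x) * Real.exp (u * f x) :=
                  mul_le_mul_of_nonneg_right h6 (Real.exp_pos _).le
              _ = Real.exp ((u + 1) * f x) := by rw [← Real.exp_add]; congr 1; ring
          rw [abs_of_nonneg (le_trans hx hlow)]
          linarith [abs_nonneg (f x)]
        · have hFneg : (Real.exp (a m * f x) - 1) / a m ≤ 0 := by
            apply le_trans hup
            nlinarith [Real.exp_pos (a m * f x)]
          rw [abs_of_nonpos hFneg]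
          have : -f x = |f x| := by rw [abs_of_neg hx]
          nlinarith [Real.exp_pos ((u+1) * f x)]
      · filter_upwards with x
        have ha0 : Tendsto (fun m : ℕ => a m) atTop (𝓝 (0:ℝ)) := by
          have h1 := (tendsto_const_div_atTop_nhds_zero_nat u).comp (tendsto_add_atTop_nat 2)
          apply h1.congr
          intro m
          simp only [Function.comp_apply, ha]
          push_cast
          ring
        have h2 : Tendsto (fun m => a m * f x) atTop (𝓝 (0:ℝ)) := by
          simpa using ha0.mul_const (f x)
        have h3 : Tendsto (fun m => Real.exp (a m * f x)) atTop (𝓝 (1:ℝ)) := by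
          have := (Real.continuous_exp.tendsto 0).comp h2
          simpa [Function.comp_def] using this
        have hsf : Tendsto (fun m => f x * Real.exp (a m * f x)) atTop (𝓝 (f x)) := by
          have := h3.const_mul (f x)
          simpa using this
        apply tendsto_of_tendsto_of_tendsto_of_le_of_le tendsto_const_nhds hsf
        · intro m
          have hs := Real.add_one_le_exp (a m * f x)
          show f x ≤ (Real.exp (a m * f x) - 1) / a m
          rw [le_div_iff₀ (hapos m)]
          nlinarith
        · intro m
          have hs2 := herbst_exp_sub_one_le (a m * f x)
          show (Real.exp (a m * f x) - 1) / a m ≤ f x * Real.exp (a m * f x)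
          rw [div_le_iff₀ (hapos m)]
          nlinarith
    exact ge_of_tendsto' hDlim hρD
  -- conclude
  have hlog : Real.log (H u) ≤ u * (∫ x, f x ∂μ) + c * u ^ 2 := by
    rw [hρ] at hanchor
    simp only [] at hanchor
    have h9 : Real.log (H u) / u ≤ (∫ x, f x ∂μ) + c * u := by linarith
    rw [div_le_iff₀ hu] at h9
    nlinarith
  calc H u = Real.exp (Real.log (H u)) := (Real.exp_log (hHpos u hu)).symm
    _ ≤ Real.exp (u * (∫ x, f x ∂μ) + c * u ^ 2) := Real.exp_le_exp.mpr hlog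

set_option maxHeartbeats 2000000 in
/-- Exponential integrability bootstrap via soft truncations. -/
private lemma herbst_bootstrap (f : α → ℝ) (hfmeas : Measurable f) (hfint : Integrable f μ)
    {K : ℝ} (hK : 0 < K)
    (hent : ∀ r w : ℝ, 0 < r → 0 < w →
      w * (∫ x, (-Real.exp (-r * f x / 2)) * Real.exp (w * -Real.exp (-r * f x / 2)) ∂μ)
        - (∫ x, Real.exp (w * -Real.exp (-r * f x / 2)) ∂μ)
            * Real.log (∫ x, Real.exp (w * -Real.exp (-r * f x / 2)) ∂μ)
      ≤ K * r ^ 2 * w ^ 2 * (∫ x, Real.exp (-r * f x / 2) ^ 2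
          * Real.exp (w * -Real.exp (-r * f x / 2)) ∂μ)) :
    ∀ ε : ℝ, 0 < ε → Integrable (fun x => Real.exp (ε * f x)) μ := by
  intro ε hε
  -- notation
  set z : ℝ → α → ℝ := fun r x => Real.exp (-r * f x / 2) with hz
  set G : ℝ → ℝ → ℝ := fun r w => ∫ x, Real.exp (w * -z r x) ∂μ with hG
  set Q : ℝ → ℝ → ℝ := fun r w => ∫ x, (z r x) ^ 2 * Real.exp (w * -z r x) ∂μ with hQ
  clear_value z G Q
  have hzpos : ∀ r x, 0 < z r x := by
    intro r x; simp only [hz]; exact Real.exp_pos _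
  have hzmeas : ∀ r, Measurable (z r) := by
    intro r; simp only [hz]; exact ((hfmeas.const_mul _).div_const 2).exp
  -- integrabilities
  have int_exp : ∀ r w : ℝ, 0 < w → Integrable (fun x => Real.exp (w * -z r x)) μ := by
    intro r w hw
    apply Integrable.mono' (integrable_const 1)
    · exact (((hzmeas r).neg.const_mul w).exp).aestronglyMeasurable
    · filter_upwards with x
      rw [Real.norm_eq_abs, abs_of_pos (Real.exp_pos _), Real.exp_le_one_iff]
      have := (hzpos r x).le
      nlinarith
  have int_psi : ∀ r w : ℝ, 0 < w →
      Integrable (fun x => (-z r x) * Real.exp (w * -z r x)) μ := by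
    intro r w hw
    apply Integrable.mono' (integrable_const (1/w))
    · exact ((hzmeas r).neg.mul ((hzmeas r).neg.const_mul w).exp).aestronglyMeasurable
    · filter_upwards with x
      rw [Real.norm_eq_abs, abs_mul, abs_neg, abs_of_pos (hzpos r x),
        abs_of_pos (Real.exp_pos _)]
      have h1 : w * -z r x = -(w * z r x) := by ring
      rw [h1]
      exact herbst_mul_exp_neg_le (hzpos r x).le hw
  have int_sq : ∀ r w : ℝ, 0 < w →
      Integrable (fun x => (z r x) ^ 2 * Real.exp (w * -z r x)) μ := by
    intro r w hw
    apply Integrable.mono' (integrable_const (4/w^2))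
    · exact (((hzmeas r).pow_const 2).mul ((hzmeas r).neg.const_mul w).exp).aestronglyMeasurable
    · filter_upwards with x
      rw [Real.norm_eq_abs, abs_mul, abs_of_pos (pow_pos (hzpos r x) 2),
        abs_of_pos (Real.exp_pos _)]
      have h1 : w * -z r x = -(w * z r x) := by ring
      rw [h1]
      exact sq_herbst_mul_exp_neg_le (hzpos r x).le hw
  have hGpos : ∀ r w : ℝ, 0 < w → 0 < G r w := by
    intro r w hw; simp only [hG]; exact herbst_integral_exp_pos (int_exp r w hw)
  -- a sublevel bound for f
  set F1 : ℝ := ∫ x, |f x| ∂μ with hF1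
  have hF1nn : 0 ≤ F1 := by rw [hF1]; positivity
  set K0 : ℝ := 2 * F1 + 1 with hK0
  clear_value F1 K0
  have hK0pos : 0 < K0 := by rw [hK0]; linarith
  have hmass : (1:ℝ)/2 ≤ (μ {x | -K0 ≤ f x}).toReal := by
    have hmark := mul_meas_ge_le_integral_of_nonneg
      (f := fun x => |f x|) (Filter.Eventually.of_forall (fun x => abs_nonneg _)) hfint.abs K0
    have hsub : {x | f x < -K0} ⊆ {x | K0 ≤ |f x|} := by
      intro x hx
      simp only [Set.mem_setOf_eq] at *
      rw [abs_of_neg (by linarith)]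
      linarith
    have hm1 : (μ {x | f x < -K0}).toReal ≤ (μ {x | K0 ≤ |f x|}).toReal := by
      apply ENNReal.toReal_mono (measure_ne_top _ _)
      exact measure_mono hsub
    have hm2 : (μ {x | K0 ≤ |f x|}).toReal ≤ F1 / K0 := by
      rw [le_div_iff₀ hK0pos]
      have hmark' : K0 * (μ {x | K0 ≤ |f x|}).toReal ≤ ∫ x, |f x| ∂μ := hmark
      linarith [hmark']
    have hm3 : F1 / K0 < 1/2 := by
      rw [div_lt_iff₀ hK0pos, hK0]
      linarith
    have hcompl : (μ {x | -K0 ≤ f x}).toReal = 1 - (μ {x | f x < -K0}).toReal := by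
      have hms : MeasurableSet {x | f x < -K0} := measurableSet_lt hfmeas measurable_const
      have : {x | -K0 ≤ f x} = {x | f x < -K0}ᶜ := by
        ext x; simp [not_lt]
      rw [this, prob_compl_eq_one_sub hms, ENNReal.toReal_sub_of_le (prob_le_one) ENNReal.one_ne_top]
      simp
    rw [hcompl]
    linarith
  -- lower bound for G
  have hGlb : ∀ r w : ℝ, 0 < r → 0 < w →
      1/2 * Real.exp (-(w * Real.exp (r * K0 / 2))) ≤ G r w := by
    intro r w hr hw
    set Z1 : ℝ := Real.exp (r * K0 / 2) with hZ1
    set S : Set α := {x | -K0 ≤ f x} with hS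
    clear_value Z1
    have hSmeas : MeasurableSet S := measurableSet_le measurable_const hfmeas
    have h1 : ∀ x ∈ S, Real.exp (-(w * Z1)) ≤ Real.exp (w * -z r x) := by
      intro x hx
      apply Real.exp_le_exp.mpr
      have hzle : z r x ≤ Z1 := by
        simp only [hz, hZ1]
        apply Real.exp_le_exp.mpr
        have : -K0 ≤ f x := hx
        have hr2 : 0 < r / 2 := by linarith
        nlinarith
      nlinarith
    have h2 : ∫ x in S, Real.exp (-(w * Z1)) ∂μ ≤ ∫ x in S, Real.exp (w * -z r x) ∂μ := by
      apply setIntegral_mono_on (integrableOn_const (measure_ne_top _ _))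
        ((int_exp r w hw).integrableOn) hSmeas h1
    have h3 : ∫ x in S, Real.exp (-(w * Z1)) ∂μ = (μ S).toReal * Real.exp (-(w * Z1)) := by
      rw [setIntegral_const, smul_eq_mul]
      rfl
    have h4 : ∫ x in S, Real.exp (w * -z r x) ∂μ ≤ G r w := by
      simp only [hG]
      apply setIntegral_le_integral (int_exp r w hw)
      filter_upwards with x
      exact (Real.exp_pos _).le
    have h5 : 1/2 * Real.exp (-(w * Z1)) ≤ (μ S).toReal * Real.exp (-(w * Z1)) := by
      apply mul_le_mul_of_nonneg_right hmass (Real.exp_pos _).le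
    linarith
  -- upper bound for Q
  have hQb : ∀ r w : ℝ, 0 < r → 0 < w →
      Q r w ≤ (6 * Real.exp (r * K0 / 2) ^ 2 + 24 / w ^ 2) * G r w := by
    intro r w hr hw
    set Z1 : ℝ := Real.exp (r * K0 / 2) with hZ1
    set Z0 : ℝ := Z1 + 2 / w with hZ0
    clear_value Z1 Z0
    have hZ1pos : 0 < Z1 := by rw [hZ1]; exact Real.exp_pos _
    have hZ0pos : 0 < Z0 := by rw [hZ0]; positivity
    have h2w : 2 / w ≤ Z0 := by rw [hZ0]; linarith
    -- pointwise bound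
    have hpt : ∀ x, (z r x) ^ 2 * Real.exp (w * -z r x)
        ≤ Z0 ^ 2 * Real.exp (w * -z r x) + Z0 ^ 2 * Real.exp (-(w * Z0)) := by
      intro x
      rcases le_or_gt (z r x) Z0 with hle | hgt
      · have : (z r x) ^ 2 ≤ Z0 ^ 2 := by nlinarith [(hzpos r x).le]
        nlinarith [Real.exp_pos (w * -z r x), Real.exp_pos (-(w * Z0))]
      · -- decreasing tail : z ≥ Z0 ≥ 2/w
        have hd : 0 ≤ z r x - Z0 := by linarith
        have h1 : z r x / Z0 ≤ Real.exp ((z r x - Z0) / Z0) := by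
          have := Real.add_one_le_exp ((z r x - Z0) / Z0)
          have h2 : (z r x - Z0) / Z0 + 1 = z r x / Z0 := by field_simp; ring
          linarith
        have h3 : (z r x / Z0) ^ 2 ≤ Real.exp ((z r x - Z0) / Z0) ^ 2 := by
          have h0 : 0 ≤ z r x / Z0 := div_nonneg (hzpos r x).le hZ0pos.le
          nlinarith
        have h4 : Real.exp ((z r x - Z0) / Z0) ^ 2 = Real.exp (2 / Z0 * (z r x - Z0)) := by
          rw [sq, ← Real.exp_add]
          congr 1
          field_simp
          ring
        have h5 : Real.exp (2 / Z0 * (z r x - Z0)) ≤ Real.exp (w * (z r x - Z0)) := by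
          apply Real.exp_le_exp.mpr
          apply mul_le_mul_of_nonneg_right _ hd
          rw [div_le_iff₀ hZ0pos]
          calc (2:ℝ) = (2/w) * w := by field_simp
            _ ≤ Z0 * w := by apply mul_le_mul_of_nonneg_right h2w hw.le
            _ = w * Z0 := mul_comm _ _
        have h6 : (z r x)^2 ≤ Z0^2 * Real.exp (w * (z r x - Z0)) := by
          have h7 : (z r x / Z0)^2 ≤ Real.exp (w * (z r x - Z0)) := by
            calc (z r x / Z0) ^ 2 ≤ Real.exp ((z r x - Z0)/Z0) ^ 2 := h3
              _ = Real.exp (2 / Z0 * (z r x - Z0)) := h4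
              _ ≤ Real.exp (w * (z r x - Z0)) := h5
          have h8 : (z r x / Z0)^2 = (z r x)^2 / Z0^2 := by rw [div_pow]
          rw [h8, div_le_iff₀ (by positivity)] at h7
          linarith [h7]
        have h9 : (z r x)^2 * Real.exp (w * -z r x) ≤ Z0^2 * Real.exp (-(w * Z0)) := by
          have h10 : Real.exp (w * (z r x - Z0)) * Real.exp (w * -z r x)
              = Real.exp (-(w * Z0)) := by
            rw [← Real.exp_add]; congr 1; ring
          calc (z r x)^2 * Real.exp (w * -z r x)
              ≤ (Z0^2 * Real.exp (w * (z r x - Z0))) * Real.exp (w * -z r x) :=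
                mul_le_mul_of_nonneg_right h6 (Real.exp_pos _).le
            _ = Z0^2 * (Real.exp (w * (z r x - Z0)) * Real.exp (w * -z r x)) := by ring
            _ = Z0^2 * Real.exp (-(w * Z0)) := by rw [h10]
        nlinarith [Real.exp_pos (w * -z r x), sq_nonneg Z0]
    -- integrate
    have hint1 : Q r w ≤ Z0 ^ 2 * G r w + Z0 ^ 2 * Real.exp (-(w * Z0)) := by
      have hi : Integrable (fun x => Z0 ^ 2 * Real.exp (w * -z r x)
          + Z0 ^ 2 * Real.exp (-(w * Z0))) μ :=
        ((int_exp r w hw).const_mul _).add (integrable_const _)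
      have h0 := integral_mono (int_sq r w hw) hi hpt
      rw [integral_add ((int_exp r w hw).const_mul _) (integrable_const _),
        integral_const_mul, integral_const, probReal_univ, one_smul] at h0
      simp only [hQ, hG]
      exact h0
    -- absorb the constant into G
    have habs : Z0 ^ 2 * Real.exp (-(w * Z0)) ≤ 2 * Z0 ^ 2 * G r w := by
      have hww : w * (2/w) = 2 := by field_simp
      have hineq : -(w * Z0) ≤ -(w * Z1) + (-2) := by
        rw [hZ0, mul_add, hww]
        linarith
      have h1 : Real.exp (-(w * Z0)) ≤ Real.exp (-(w * Z1)) * Real.exp (-2) := by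
        rw [← Real.exp_add]
        exact Real.exp_le_exp.mpr hineq
      have h2 := hGlb r w hr hw
      have h3 : Real.exp (-(w * Z1)) ≤ 2 * G r w := by
        simp only [hZ1]; linarith [h2]
      have h4 : Real.exp (-2) ≤ (1:ℝ) := by
        rw [Real.exp_le_one_iff]; norm_num
      calc Z0 ^ 2 * Real.exp (-(w * Z0)) ≤ Z0 ^ 2 * (Real.exp (-(w * Z1)) * Real.exp (-2)) :=
            mul_le_mul_of_nonneg_left h1 (by positivity)
        _ ≤ Z0 ^ 2 * (2 * G r w * 1) := by
            apply mul_le_mul_of_nonneg_left _ (by positivity)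
            apply mul_le_mul h3 h4 (Real.exp_pos _).le
            linarith [hGpos r w hw]
        _ = 2 * Z0 ^ 2 * G r w := by ring
    have hfin : Q r w ≤ 3 * Z0 ^ 2 * G r w := by linarith
    have hZ0sq : Z0 ^ 2 ≤ 2 * Z1 ^ 2 + 2 * (2/w) ^ 2 := by
      rw [hZ0]; nlinarith [sq_nonneg (Z1 - 2/w)]
    have h8 : (2/w)^2 = 4 / w^2 := by rw [div_pow]; norm_num
    have hGnn := (hGpos r w hw).le
    calc Q r w ≤ 3 * Z0 ^ 2 * G r w := hfin
      _ ≤ 3 * (2 * Z1 ^ 2 + 2 * (4 / w ^ 2)) * G r w := by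
          apply mul_le_mul_of_nonneg_right _ hGnn
          rw [← h8]
          nlinarith
      _ = (6 * Z1 ^ 2 + 24 / w ^ 2) * G r w := by ring
  -- one dyadic step of the Herbst iteration
  have hzx : ∀ (r' : ℝ) (x : α), Real.exp (-r' * f x / 2) = z r' x := by
    intro r' x; rw [hz]
  have rho_step : ∀ r v : ℝ, 0 < r → 0 < v →
      Real.log (G r (2*v)) / (2*v) ≤ Real.log (G r v) / v
        + 12*K*r^2*Real.exp (r * K0 / 2)^2*v + 12*K*r^2/v := by
    intro r v hr hv
    have hw : 0 < 2*v := by linarith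
    have hEnt0 := hent r (2*v) hr hw
    simp only [hzx] at hEnt0
    have hstep := herbst_tilt_step (μ := μ) (fun x => -z r x) hv (by linarith : v < 2*v)
        (int_exp r (2*v) hw) (int_exp r v hv) (int_psi r (2*v) hw) hEnt0
    beta_reduce at hstep
    have hA2eq : (∫ x, Real.exp (2*v * -z r x) ∂μ) = G r (2*v) := by rw [hG]
    have hA1eq : (∫ x, Real.exp (v * -z r x) ∂μ) = G r v := by rw [hG]
    have hQeq : (∫ x, (z r x)^2 * Real.exp (2*v * -z r x) ∂μ) = Q r (2*v) := by rw [hQ]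
    rw [hA2eq, hA1eq, hQeq] at hstep
    set Z1 : ℝ := Real.exp (r * K0 / 2) with hZ1
    set A2 : ℝ := G r (2*v) with hA2
    set A1 : ℝ := G r v with hA1
    set X2 : ℝ := Real.log A2 with hX2
    set X1 : ℝ := Real.log A1 with hX1
    have hA2pos : 0 < A2 := hGpos r (2*v) hw
    have hQbv := hQb r (2*v) hr hw
    rw [← hZ1, ← hA2] at hQbv
    clear_value Z1 A2 A1 X2 X1
    have hZ1pos : 0 < Z1 := by rw [hZ1]; positivity
    -- clear v from hstep
    have h2v : 2*v - v = v := by ring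
    rw [h2v] at hstep
    have hd1 : A2 * X2 ≤ 2 * (A2 * X1) + K * r^2 * (2*v)^2 * Q r (2*v) := by
      have := hstep
      nlinarith
    have hQnn : 0 ≤ Q r (2*v) := by
      rw [hQ]
      positivity
    have hd2 : A2 * X2 ≤ 2 * (A2 * X1)
        + K * r^2 * (2*v)^2 * ((6 * Z1 ^ 2 + 24 / (2*v) ^ 2) * A2) := by
      have hb : K * r^2 * (2*v)^2 * Q r (2*v)
          ≤ K * r^2 * (2*v)^2 * ((6 * Z1 ^ 2 + 24 / (2*v) ^ 2) * A2) := by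
        apply mul_le_mul_of_nonneg_left hQbv
        positivity
      linarith
    have hexp : K * r^2 * (2*v)^2 * ((6 * Z1 ^ 2 + 24 / (2*v) ^ 2) * A2)
        = A2 * (24*K*r^2*Z1^2*v^2 + 24*K*r^2) := by
      field_simp
      ring
    rw [hexp] at hd2
    have hd3 : X2 ≤ 2 * X1 + (24*K*r^2*Z1^2*v^2 + 24*K*r^2) := by
      have h0 : A2 * X2 ≤ A2 * (2 * X1 + (24*K*r^2*Z1^2*v^2 + 24*K*r^2)) := by
        nlinarith
      exact le_of_mul_le_mul_left h0 hA2pos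
    rw [div_le_iff₀ (by positivity : (0:ℝ) < 2*v)]
    have hrhs : (X1 / v + 12*K*r^2*Z1^2*v + 12*K*r^2/v) * (2*v)
        = 2 * X1 + (24*K*r^2*Z1^2*v^2 + 24*K*r^2) := by
      field_simp
      ring
    rw [hrhs]
    exact hd3
  -- dyadic telescoping
  have dyadic : ∀ r : ℝ, 0 < r → ∀ j : ℕ,
      Real.log (G r (r * 2^j)) / (r * 2^j) ≤ Real.log (G r r) / r
        + 12*K*r^2*Real.exp (r * K0 / 2)^2*(r*(2^j - 1))
        + 24*K*r^2/r*(1 - (1/2:ℝ)^j) := by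
    intro r hr j
    induction j with
    | zero => simp
    | succ j ih =>
      have hv : (0:ℝ) < r * 2^j := by positivity
      have hstep := rho_step r (r*2^j) hr hv
      have h2 : 2*(r*2^j) = r*2^(j+1) := by ring
      rw [h2] at hstep
      have hpow : ((2:ℝ))^j ≠ 0 := by positivity
      have e1 : 12*K*r^2*Real.exp (r * K0 / 2)^2*(r*(2^(j+1) - 1))
          = 12*K*r^2*Real.exp (r * K0 / 2)^2*(r*(2^j - 1))
            + 12*K*r^2*Real.exp (r * K0 / 2)^2*(r*2^j) := by
        rw [pow_succ]
        ring
      have e2 : 24*K*r^2/r*(1 - (1/2:ℝ)^(j+1))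
          = 24*K*r^2/r*(1 - (1/2:ℝ)^j) + 12*K*r^2/(r*2^j) := by
        have hhalf : (1/2:ℝ)^(j+1) = (1/2)^j / 2 := by rw [pow_succ]; ring
        rw [hhalf, one_div_pow]
        field_simp
        ring
      rw [e1, e2]
      linarith
  -- the anchor bound at w = r
  have anchor : ∀ r : ℝ, 0 < r → Real.log (G r r) / r ≤ -1 + r/2*F1 + 4*r := by
    intro r hr
    have hmin_meas : Measurable (fun x => min (z r x) 2) := (hzmeas r).min measurable_const
    have hmin_int : Integrable (fun x => min (z r x) 2) μ := by
      apply Integrable.mono' (integrable_const 2) hmin_meas.aestronglyMeasurable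
      filter_upwards with x
      rw [Real.norm_eq_abs, abs_of_nonneg (le_min (hzpos r x).le (by norm_num))]
      exact min_le_right _ _
    -- pointwise upper bound on exp(r * -z)
    have hpt : ∀ x, Real.exp (r * -z r x) ≤ (1 + 4*r^2) - r * min (z r x) 2 := by
      intro x
      have hminnn : 0 ≤ min (z r x) 2 := le_min (hzpos r x).le (by norm_num)
      have h1 : Real.exp (r * -z r x) ≤ Real.exp (-(r * min (z r x) 2)) := by
        apply Real.exp_le_exp.mpr
        have := min_le_left (z r x) 2
        nlinarith
      have h2 := herbst_exp_neg_upper (mul_nonneg hr.le hminnn)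
      have h3 : (r * min (z r x) 2)^2 ≤ 4*r^2 := by
        have h4 : min (z r x) 2 ≤ 2 := min_le_right _ _
        have h5 : min (z r x) 2 ^ 2 ≤ 4 := by nlinarith
        nlinarith [sq_nonneg r, mul_le_mul_of_nonneg_left h5 (sq_nonneg r)]
      calc Real.exp (r * -z r x) ≤ Real.exp (-(r * min (z r x) 2)) := h1
        _ ≤ 1 - r * min (z r x) 2 + (r * min (z r x) 2)^2 := h2
        _ ≤ (1 + 4*r^2) - r * min (z r x) 2 := by linarith
    have hGub : G r r ≤ (1 + 4*r^2) - r * (∫ x, min (z r x) 2 ∂μ) := by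
      have hi : Integrable (fun x => (1 + 4*r^2) - r * min (z r x) 2) μ :=
        (integrable_const _).sub (hmin_int.const_mul r)
      have h0 := integral_mono (int_exp r r hr) hi hpt
      rw [integral_sub (integrable_const _) (hmin_int.const_mul r), integral_const,
        integral_const_mul, probReal_univ, one_smul] at h0
      rw [hG]
      exact h0
    -- lower bound on the truncated mean
    have hminlb : 1 - r/2*F1 ≤ ∫ x, min (z r x) 2 ∂μ := by
      have hpt2 : ∀ x, 1 - r/2*|f x| ≤ min (z r x) 2 := by
        intro x
        rcases le_or_gt 0 (f x) with hx | hx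
        · have hz1 : z r x ≤ 1 := by
            simp only [hz]
            rw [Real.exp_le_one_iff]
            nlinarith
          have hzlb : 1 - r/2*|f x| ≤ z r x := by
            simp only [hz]
            have := Real.add_one_le_exp (-r * f x / 2)
            rw [abs_of_nonneg hx]
            nlinarith
          rw [min_eq_left (by linarith : z r x ≤ 2)]
          exact hzlb
        · have : (1:ℝ) ≤ min (z r x) 2 := by
            apply le_min _ (by norm_num)
            simp only [hz]
            rw [Real.one_le_exp_iff]
            nlinarith
          nlinarith [abs_nonneg (f x)]
      have hi2 : Integrable (fun x => 1 - r/2*|f x|) μ :=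
        (integrable_const _).sub (hfint.abs.const_mul _)
      have h0 := integral_mono hi2 hmin_int hpt2
      rw [integral_sub (integrable_const _) (hfint.abs.const_mul _), integral_const,
        integral_const_mul, probReal_univ, one_smul] at h0
      rw [hF1]
      exact h0
    -- conclude
    have hlog : Real.log (G r r) ≤ G r r - 1 := Real.log_le_sub_one_of_pos (hGpos r r hr)
    rw [div_le_iff₀ hr]
    have hfin : Real.log (G r r) ≤ -r + r*(r/2*F1) + 4*r^2 := by
      have h5 : r * (1 - r/2*F1) ≤ r * (∫ x, min (z r x) 2 ∂μ) :=
        mul_le_mul_of_nonneg_left hminlb hr.le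
      nlinarith
    nlinarith
  -- per-scale bound
  set X : ℝ := ε*F1 + 8*ε + 48*K*Real.exp K0*ε^2 + 48*K*ε with hX
  clear_value X
  have main : ∀ n : ℕ, ∀ r : ℝ, r = Real.sqrt (2*ε/2^n) → r ≤ 1 →
      r*2^n + Real.log (G r (r*2^n)) ≤ X := by
    intro n r hrdef hr1
    have h2n : (0:ℝ) < 2^n := by positivity
    have hrpos : 0 < r := by
      rw [hrdef]
      apply Real.sqrt_pos.mpr
      positivity
    have hr2 : r^2 = 2*ε/2^n := by
      rw [hrdef]
      exact Real.sq_sqrt (by positivity)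
    have hru : r * (r*2^n) = 2*ε := by
      have h0 : r*(r*2^n) = r^2*2^n := by ring
      rw [h0, hr2]
      field_simp
    set u : ℝ := r*2^n with hu
    have hupos : 0 < u := by rw [hu]; positivity
    have hdy := dyadic r hrpos n
    have han := anchor r hrpos
    rw [← hu] at hdy
    have hZ1sq : Real.exp (r*K0/2)^2 = Real.exp (r*K0) := by
      rw [sq, ← Real.exp_add]
      congr 1
      ring
    have hZ1le : Real.exp (r*K0) ≤ Real.exp K0 := by
      apply Real.exp_le_exp.mpr
      nlinarith
    have hEpos : (0:ℝ) < Real.exp (r*K0) := Real.exp_pos _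
    have hterm1 : 12*K*r^2*Real.exp (r*K0/2)^2*(r*(2^n - 1))
        ≤ 12*K*r^2*Real.exp K0*u := by
      rw [hZ1sq]
      have hle1 : r*((2:ℝ)^n - 1) ≤ u := by
        rw [hu]
        nlinarith
      calc 12*K*r^2*Real.exp (r*K0)*(r*((2:ℝ)^n - 1))
          ≤ 12*K*r^2*Real.exp (r*K0)*u := by
            apply mul_le_mul_of_nonneg_left hle1 (by positivity)
        _ ≤ 12*K*r^2*Real.exp K0*u := by
            apply mul_le_mul_of_nonneg_right _ hupos.le
            apply mul_le_mul_of_nonneg_left hZ1le (by positivity)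
    have hterm2 : 24*K*r^2/r*(1 - (1/2:ℝ)^n) ≤ 24*K*r := by
      have h24 : 24*K*r^2/r = 24*K*r := by
        field_simp
      rw [h24]
      have h0 : (0:ℝ) ≤ (1/2:ℝ)^n := by positivity
      have hKr : (0:ℝ) ≤ 24*K*r := by positivity
      nlinarith [mul_nonneg hKr h0]
    have hsum : Real.log (G r u)/u ≤ (-1 + r/2*F1 + 4*r) + 12*K*r^2*Real.exp K0*u + 24*K*r := by
      have := hdy
      linarith [hterm1, hterm2, han]
    rw [div_le_iff₀ hupos] at hsum
    have e3 : ((-1 + r/2*F1 + 4*r) + 12*K*r^2*Real.exp K0*u + 24*K*r)*u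
        = -u + (r*u)/2*F1 + 4*(r*u) + 12*K*Real.exp K0*((r*u)*(r*u)) + 24*K*(r*u) := by
      ring
    rw [e3, hru] at hsum
    rw [hX]
    nlinarith [hsum]
  -- sequences
  set rs : ℕ → ℝ := fun n => Real.sqrt (2*ε/2^n) with hrs
  have hrspos : ∀ n, 0 < rs n := by
    intro n
    rw [hrs]
    apply Real.sqrt_pos.mpr
    positivity
  set us : ℕ → ℝ := fun n => rs n * 2^n with hus
  have huspos : ∀ n, 0 < us n := by
    intro n
    rw [hus]
    have := hrspos n
    positivity
  have hrus : ∀ n, rs n * us n = 2*ε := by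
    intro n
    rw [hus]
    have h0 : rs n * (rs n * 2^n) = (rs n)^2 * 2^n := by ring
    rw [h0, hrs]
    simp only []
    rw [Real.sq_sqrt (by positivity)]
    field_simp
  -- geometric decay
  have h2e : Tendsto (fun n : ℕ => 2*ε/2^n) atTop (𝓝 0) := by
    have hgeo : Tendsto (fun n : ℕ => ((1:ℝ)/2)^n) atTop (𝓝 0) :=
      tendsto_pow_atTop_nhds_zero_of_lt_one (by norm_num) (by norm_num)
    have := hgeo.const_mul (2*ε)
    simp only [mul_zero] at this
    apply this.congr
    intro n
    rw [div_pow, one_pow]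
    ring
  have hrs0 : Tendsto rs atTop (𝓝 0) := by
    rw [hrs]
    have hc : Tendsto Real.sqrt (𝓝 0) (𝓝 0) := by
      have := Real.continuous_sqrt.tendsto 0
      simpa using this
    exact hc.comp h2e
  have hev : ∀ᶠ n in atTop, rs n ≤ 1 := by
    have h1 : ∀ᶠ n in atTop, 2*ε/2^n < 1 := h2e.eventually_lt_const (by norm_num)
    filter_upwards [h1] with n hn
    rw [hrs]
    simp only []
    calc Real.sqrt (2*ε/2^n) ≤ Real.sqrt 1 := Real.sqrt_le_sqrt hn.le
      _ = 1 := Real.sqrt_one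
  -- pointwise convergence
  have hpt : ∀ x : α, Tendsto (fun n => us n * (1 - z (rs n) x)) atTop (𝓝 (ε * f x)) := by
    intro x
    set c : ℝ := f x with hc
    set F : ℝ → ℝ := fun r => 1 - Real.exp (-r * c / 2) with hF
    have hder : HasDerivAt F (c/2) 0 := by
      have h1 : HasDerivAt (fun r : ℝ => -r * c / 2) (-c/2) 0 := by
        have he : (fun r : ℝ => -r * c / 2) = fun r => (-c/2)*r := by
          funext r
          ring
        rw [he]
        simpa using (hasDerivAt_id (0:ℝ)).const_mul (-c/2)
      have h2 : HasDerivAt (fun r : ℝ => Real.exp (-r * c / 2)) (-c/2) 0 := by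
        have := h1.exp
        simpa using this
      have h3 := h2.const_sub 1
      rw [hF]
      rw [show c/2 = -(-c/2) by ring]
      exact h3
    have hslope := hasDerivAt_iff_tendsto_slope.mp hder
    have hrsne : Tendsto rs atTop (𝓝[≠] (0:ℝ)) := by
      apply tendsto_nhdsWithin_of_tendsto_nhds_of_eventually_within _ hrs0
      filter_upwards with n
      exact (hrspos n).ne'
    have htend : Tendsto (fun n => slope F 0 (rs n)) atTop (𝓝 (c/2)) := hslope.comp hrsne
    have hmul := htend.const_mul (2*ε)
    have hfinal : (2*ε) * (c/2) = ε * c := by ring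
    rw [hfinal] at hmul
    apply hmul.congr
    intro n
    rw [slope_def_field]
    have hF0 : F 0 = 0 := by
      rw [hF]
      simp
    rw [hF0]
    have hzeq : z (rs n) x = Real.exp (-(rs n) * c / 2) := by
      rw [hz, hc]
    have hFn : F (rs n) = 1 - z (rs n) x := by
      rw [hF, hzeq]
    rw [hFn]
    have hne : rs n ≠ 0 := (hrspos n).ne'
    have husn : us n = 2*ε / rs n := by
      have := hrus n
      field_simp
      linarith [hrus n]
    rw [husn]
    field_simp
    ring
  -- Fatou
  have hmeasn : ∀ n : ℕ, Measurable
      (fun x => ENNReal.ofReal (Real.exp (us n * (1 - z (rs n) x)))) := by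
    intro n
    apply ENNReal.measurable_ofReal.comp
    apply Real.measurable_exp.comp
    exact (measurable_const.sub (hzmeas (rs n))).const_mul (us n)
  have hptE : ∀ x : α, Tendsto (fun n => ENNReal.ofReal (Real.exp (us n * (1 - z (rs n) x))))
      atTop (𝓝 (ENNReal.ofReal (Real.exp (ε * f x)))) := by
    intro x
    exact (ENNReal.continuous_ofReal.tendsto _).comp ((Real.continuous_exp.tendsto _).comp (hpt x))
  have hfatou : ∫⁻ x, ENNReal.ofReal (Real.exp (ε * f x)) ∂μ
      ≤ Filter.liminf (fun n => ∫⁻ x, ENNReal.ofReal (Real.exp (us n * (1 - z (rs n) x))) ∂μ)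
          atTop := by
    have h1 : ∫⁻ x, ENNReal.ofReal (Real.exp (ε * f x)) ∂μ
        = ∫⁻ x, Filter.liminf (fun n => ENNReal.ofReal (Real.exp (us n * (1 - z (rs n) x))))
            atTop ∂μ := by
      apply lintegral_congr
      intro x
      exact ((hptE x).liminf_eq).symm
    rw [h1]
    exact lintegral_liminf_le hmeasn
  -- per-n value bound
  have hval : ∀ n : ℕ, rs n ≤ 1 →
      (∫⁻ x, ENNReal.ofReal (Real.exp (us n * (1 - z (rs n) x))) ∂μ)
        ≤ ENNReal.ofReal (Real.exp X) := by
    intro n h1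
    have hcongr : (fun x => ENNReal.ofReal (Real.exp (us n * (1 - z (rs n) x))))
        = fun x => ENNReal.ofReal (Real.exp (us n))
            * ENNReal.ofReal (Real.exp (us n * -z (rs n) x)) := by
      funext x
      rw [← ENNReal.ofReal_mul (Real.exp_pos _).le, ← Real.exp_add]
      congr 2
      ring
    rw [hcongr, lintegral_const_mul _ (by
      apply ENNReal.measurable_ofReal.comp
      exact Real.measurable_exp.comp ((hzmeas (rs n)).neg.const_mul (us n)))]
    have hlint : (∫⁻ x, ENNReal.ofReal (Real.exp (us n * -z (rs n) x)) ∂μ)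
        = ENNReal.ofReal (G (rs n) (us n)) := by
      rw [← ofReal_integral_eq_lintegral_ofReal (int_exp (rs n) (us n) (huspos n))
        (Filter.Eventually.of_forall (fun x => (Real.exp_pos _).le))]
      rw [hG]
    rw [hlint, ← ENNReal.ofReal_mul (Real.exp_pos _).le]
    apply ENNReal.ofReal_le_ofReal
    have hGv : 0 < G (rs n) (us n) := hGpos (rs n) (us n) (huspos n)
    have hmain := main n (rs n) (by rw [hrs]) h1
    have husn2 : us n = rs n * 2^n := by rw [hus]
    rw [← husn2] at hmain
    calc Real.exp (us n) * G (rs n) (us n)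
        = Real.exp (us n + Real.log (G (rs n) (us n))) := by
          rw [Real.exp_add, Real.exp_log hGv]
      _ ≤ Real.exp X := Real.exp_le_exp.mpr hmain
  have hevle : ∀ᶠ n in atTop,
      (∫⁻ x, ENNReal.ofReal (Real.exp (us n * (1 - z (rs n) x))) ∂μ)
        ≤ ENNReal.ofReal (Real.exp X) := by
    filter_upwards [hev] with n hn
    exact hval n hn
  have hbound : ∫⁻ x, ENNReal.ofReal (Real.exp (ε * f x)) ∂μ ≤ ENNReal.ofReal (Real.exp X) := by
    refine le_trans hfatou ?_
    calc Filter.liminf (fun n => ∫⁻ x, ENNReal.ofReal (Real.exp (us n * (1 - z (rs n) x))) ∂μ)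
          atTop ≤ Filter.liminf (fun _ : ℕ => ENNReal.ofReal (Real.exp X)) atTop :=
            Filter.liminf_le_liminf hevle
      _ = ENNReal.ofReal (Real.exp X) := Filter.liminf_const _
  -- conclude integrability
  constructor
  · exact (Real.measurable_exp.comp (hfmeas.const_mul ε)).aestronglyMeasurable
  · rw [hasFiniteIntegral_iff_ofReal (Filter.Eventually.of_forall (fun x => (Real.exp_pos _).le))]
    exact lt_of_le_of_lt hbound ENNReal.ofReal_lt_top

end HerbstAux

/-- Herbst's argument: if a probability measure `μ` satisfies a log-Sobolev inequality
`Ent_μ(f²) ≤ 2C E_μ[Γ(f)]` for all `f` in an algebra `𝒜` stable under the exponential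
maps used in Herbst's argument (with the chain rule for `Γ`), then any `f ∈ 𝒜` with
`Γ(f) ≤ σ²` pointwise satisfies the Gaussian tail bound
`μ(f − E_μ[f] ≥ t) ≤ exp(−t²/(2Cσ²))`. -/
theorem herbst_gaussian_concentration {α : Type*} [MeasurableSpace α]
    (μ : Measure α) [IsProbabilityMeasure μ]
    (𝒜 : Set (α → ℝ)) (Γ : (α → ℝ) → α → ℝ)
    (hΓpos : ∀ f x, 0 ≤ Γ f x)
    -- stability of the algebra under the exponential tilts used in Herbst's argument
    (hmem : ∀ f ∈ 𝒜, ∀ l : ℝ, (fun x => Real.exp (l * f x / 2)) ∈ 𝒜)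
    -- chain rule for the carré du champ on exponential tilts
    (hchain : ∀ f ∈ 𝒜, ∀ (l : ℝ) (x : α),
      Γ (fun y => Real.exp (l * f y / 2)) x
        = (l / 2) ^ 2 * Real.exp (l * f x) * Γ f x)
    (C : ℝ) (hC : 0 < C)
    -- the log-Sobolev inequality on the algebra `𝒜`
    (hLSI : ∀ g ∈ 𝒜,
      (∫ x, (g x) ^ 2 * Real.log ((g x) ^ 2) ∂μ)
          - (∫ x, (g x) ^ 2 ∂μ) * Real.log (∫ x, (g x) ^ 2 ∂μ)
        ≤ 2 * C * ∫ x, Γ g x ∂μ)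
    (f : α → ℝ) (hf : f ∈ 𝒜) (hfmeas : Measurable f) (hfint : Integrable f μ)
    (σ : ℝ) (hσ : 0 < σ) (hΓf : ∀ x, Γ f x ≤ σ ^ 2)
    (t : ℝ) (ht : 0 ≤ t) :
    μ {x | (∫ y, f y ∂μ) + t ≤ f x}
      ≤ ENNReal.ofReal (Real.exp (-(t ^ 2) / (2 * C * σ ^ 2))) := by
  have hσ2 : (0:ℝ) < σ ^ 2 := by positivity
  have hzmeas : ∀ r : ℝ, Measurable (fun x => Real.exp (-r * f x / 2)) :=
    fun r => ((hfmeas.const_mul _).div_const 2).exp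
  -- entropy bound for the double tilts (Part I)
  have hentI : ∀ r w : ℝ, 0 < r → 0 < w →
      w * (∫ x, (-Real.exp (-r * f x / 2)) * Real.exp (w * -Real.exp (-r * f x / 2)) ∂μ)
        - (∫ x, Real.exp (w * -Real.exp (-r * f x / 2)) ∂μ)
            * Real.log (∫ x, Real.exp (w * -Real.exp (-r * f x / 2)) ∂μ)
      ≤ (C * σ ^ 2 / 8) * r ^ 2 * w ^ 2 * (∫ x, Real.exp (-r * f x / 2) ^ 2
          * Real.exp (w * -Real.exp (-r * f x / 2)) ∂μ) := by
    intro r w hr hw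
    have hzmem : (fun x => Real.exp (-r * f x / 2)) ∈ 𝒜 := hmem f hf (-r)
    have hgmem : (fun x => Real.exp (-w * Real.exp (-r * f x / 2) / 2)) ∈ 𝒜 :=
      hmem _ hzmem (-w)
    have hLSIg :
        (∫ x, (Real.exp (-w * Real.exp (-r * f x / 2) / 2)) ^ 2
            * Real.log ((Real.exp (-w * Real.exp (-r * f x / 2) / 2)) ^ 2) ∂μ)
          - (∫ x, (Real.exp (-w * Real.exp (-r * f x / 2) / 2)) ^ 2 ∂μ)
              * Real.log (∫ x, (Real.exp (-w * Real.exp (-r * f x / 2) / 2)) ^ 2 ∂μ)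
        ≤ 2 * C * ∫ x, Γ (fun y => Real.exp (-w * Real.exp (-r * f y / 2) / 2)) x ∂μ :=
      hLSI _ hgmem
    have hsq : ∀ x, (Real.exp (-w * Real.exp (-r * f x / 2) / 2)) ^ 2
        = Real.exp (w * -Real.exp (-r * f x / 2)) := by
      intro x
      rw [sq, ← Real.exp_add]
      congr 1
      ring
    have e1 : (fun x => (Real.exp (-w * Real.exp (-r * f x / 2) / 2)) ^ 2
          * Real.log ((Real.exp (-w * Real.exp (-r * f x / 2) / 2)) ^ 2))
        = fun x => w * ((-Real.exp (-r * f x / 2))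
            * Real.exp (w * -Real.exp (-r * f x / 2))) := by
      funext x
      rw [hsq x, Real.log_exp]
      ring
    have e2 : (fun x => (Real.exp (-w * Real.exp (-r * f x / 2) / 2)) ^ 2)
        = fun x => Real.exp (w * -Real.exp (-r * f x / 2)) := by
      funext x
      rw [hsq x]
    rw [e1, e2, integral_const_mul] at hLSIg
    -- chain rule bound on the carré du champ
    have hΓg : ∀ x, Γ (fun y => Real.exp (-w * Real.exp (-r * f y / 2) / 2)) x
        = (w/2)^2 * (r/2)^2 * Real.exp (-r * f x)
          * Real.exp (w * -Real.exp (-r * f x / 2)) * Γ f x := by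
      intro x
      have h1 := hchain _ hzmem (-w) x
      have h2 := hchain f hf (-r) x
      rw [h1, h2]
      have h3 : Real.exp (-w * Real.exp (-r * f x / 2))
          = Real.exp (w * -Real.exp (-r * f x / 2)) := by
        congr 1
        ring
      rw [h3]
      ring
    have hexpz : ∀ x, Real.exp (-r * f x) = Real.exp (-r * f x / 2) ^ 2 := by
      intro x
      rw [sq, ← Real.exp_add]
      congr 1
      ring
    have hpt : ∀ x, Γ (fun y => Real.exp (-w * Real.exp (-r * f y / 2) / 2)) x
        ≤ (w/2)^2 * (r/2)^2 * σ^2 * (Real.exp (-r * f x / 2) ^ 2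
            * Real.exp (w * -Real.exp (-r * f x / 2))) := by
      intro x
      rw [hΓg x, hexpz x]
      have h1 := hΓf x
      have h2 := hΓpos f x
      have h3 : (0:ℝ) < Real.exp (-r * f x / 2) ^ 2 := by positivity
      have h4 : (0:ℝ) < Real.exp (w * -Real.exp (-r * f x / 2)) := Real.exp_pos _
      nlinarith [sq_nonneg (w/2), sq_nonneg (r/2), mul_pos h3 h4,
        mul_nonneg (mul_nonneg (sq_nonneg (w/2)) (sq_nonneg (r/2))) (mul_pos h3 h4).le]
    -- integrability of the dominating function
    have hdom : Integrable (fun x => (w/2)^2 * (r/2)^2 * σ^2 * (Real.exp (-r * f x / 2) ^ 2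
        * Real.exp (w * -Real.exp (-r * f x / 2)))) μ := by
      apply Integrable.mono' (integrable_const ((w/2)^2 * (r/2)^2 * σ^2 * (4/w^2)))
      · apply (((((hzmeas r).pow_const 2).mul
          (((hzmeas r).neg.const_mul w).exp)).const_mul _)).aestronglyMeasurable
      · filter_upwards with x
        rw [Real.norm_eq_abs, abs_of_nonneg (by positivity)]
        apply mul_le_mul_of_nonneg_left _ (by positivity)
        have h1 : w * -Real.exp (-r * f x / 2) = -(w * Real.exp (-r * f x / 2)) := by ring
        rw [h1]
        exact le_trans (le_of_eq rfl) (by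
          have := Real.exp_pos (-r * f x / 2)
          have h2 : Real.exp (-r * f x / 2) ^ 2
              * Real.exp (-(w * Real.exp (-r * f x / 2))) ≤ 4 / w ^ 2 := by
            have h1' : (0:ℝ) ≤ Real.exp (-r * f x / 2) := (Real.exp_pos _).le
            have h3 : w * Real.exp (-r * f x / 2) / 2 ≤ Real.exp (w * Real.exp (-r * f x / 2) / 2) := by
              nlinarith [Real.add_one_le_exp (w * Real.exp (-r * f x / 2) / 2)]
            have h4 : Real.exp (w * Real.exp (-r * f x / 2) / 2)
                * Real.exp (w * Real.exp (-r * f x / 2) / 2)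
                = Real.exp (w * Real.exp (-r * f x / 2)) := by
              rw [← Real.exp_add]; ring_nf
            have h5 : (w * Real.exp (-r * f x / 2) / 2)^2
                ≤ Real.exp (w * Real.exp (-r * f x / 2)) := by
              nlinarith [Real.exp_pos (w * Real.exp (-r * f x / 2) / 2), mul_nonneg hw.le h1']
            have h6 : Real.exp (-(w * Real.exp (-r * f x / 2)))
                * Real.exp (w * Real.exp (-r * f x / 2)) = 1 := by
              rw [← Real.exp_add]; simp
            have h7 : (0:ℝ) < Real.exp (-(w * Real.exp (-r * f x / 2))) := Real.exp_pos _
            have h8 : (w * Real.exp (-r * f x / 2) / 2)^2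
                * Real.exp (-(w * Real.exp (-r * f x / 2))) ≤ 1 := by
              calc (w * Real.exp (-r * f x / 2) / 2)^2
                    * Real.exp (-(w * Real.exp (-r * f x / 2)))
                  ≤ Real.exp (w * Real.exp (-r * f x / 2))
                    * Real.exp (-(w * Real.exp (-r * f x / 2))) :=
                    mul_le_mul_of_nonneg_right h5 h7.le
                _ = 1 := by rw [mul_comm]; exact h6
            have hw2 : (0:ℝ) < w^2 := by positivity
            rw [div_eq_inv_mul, inv_mul_eq_div, le_div_iff₀ hw2]
            nlinarith
          exact h2)
    -- bound the integral of Γ g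
    have hΓint : (∫ x, Γ (fun y => Real.exp (-w * Real.exp (-r * f y / 2) / 2)) x ∂μ)
        ≤ (w/2)^2 * (r/2)^2 * σ^2 * (∫ x, Real.exp (-r * f x / 2) ^ 2
            * Real.exp (w * -Real.exp (-r * f x / 2)) ∂μ) := by
      by_cases hGi : Integrable
          (fun x => Γ (fun y => Real.exp (-w * Real.exp (-r * f y / 2) / 2)) x) μ
      · have h0 := integral_mono hGi hdom hpt
        rwa [integral_const_mul] at h0
      · rw [integral_undef hGi]
        apply mul_nonneg (by positivity)
        apply integral_nonneg
        intro x
        positivity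
    have hfin : 2 * C * (∫ x, Γ (fun y => Real.exp (-w * Real.exp (-r * f y / 2) / 2)) x ∂μ)
        ≤ (C * σ ^ 2 / 8) * r ^ 2 * w ^ 2 * (∫ x, Real.exp (-r * f x / 2) ^ 2
            * Real.exp (w * -Real.exp (-r * f x / 2)) ∂μ) := by
      have h0 := mul_le_mul_of_nonneg_left hΓint (by positivity : (0:ℝ) ≤ 2 * C)
      have e3 : 2 * C * ((w/2)^2 * (r/2)^2 * σ^2 * (∫ x, Real.exp (-r * f x / 2) ^ 2
            * Real.exp (w * -Real.exp (-r * f x / 2)) ∂μ))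
          = (C * σ ^ 2 / 8) * r ^ 2 * w ^ 2 * (∫ x, Real.exp (-r * f x / 2) ^ 2
            * Real.exp (w * -Real.exp (-r * f x / 2)) ∂μ) := by
        ring
      rw [e3] at h0
      exact h0
    linarith
  have hK : (0:ℝ) < C * σ ^ 2 / 8 := by positivity
  have hboot := herbst_bootstrap (μ := μ) f hfmeas hfint hK hentI
  -- entropy bound for positive tilts (Part II)
  have hentII : ∀ u : ℝ, 0 < u →
      u * (∫ x, f x * Real.exp (u * f x) ∂μ)
        - (∫ x, Real.exp (u * f x) ∂μ) * Real.log (∫ x, Real.exp (u * f x) ∂μ)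
      ≤ (C * σ ^ 2 / 2) * u ^ 2 * (∫ x, Real.exp (u * f x) ∂μ) := by
    intro u hu
    have hgmem := hmem f hf u
    have hLSIg :
        (∫ x, (Real.exp (u * f x / 2)) ^ 2 * Real.log ((Real.exp (u * f x / 2)) ^ 2) ∂μ)
          - (∫ x, (Real.exp (u * f x / 2)) ^ 2 ∂μ)
              * Real.log (∫ x, (Real.exp (u * f x / 2)) ^ 2 ∂μ)
        ≤ 2 * C * ∫ x, Γ (fun y => Real.exp (u * f y / 2)) x ∂μ := hLSI _ hgmem
    have hsq : ∀ x, (Real.exp (u * f x / 2)) ^ 2 = Real.exp (u * f x) := by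
      intro x
      rw [sq, ← Real.exp_add]
      congr 1
      ring
    have e1 : (fun x => (Real.exp (u * f x / 2)) ^ 2 * Real.log ((Real.exp (u * f x / 2)) ^ 2))
        = fun x => u * (f x * Real.exp (u * f x)) := by
      funext x
      rw [hsq x, Real.log_exp]
      ring
    have e2 : (fun x => (Real.exp (u * f x / 2)) ^ 2) = fun x => Real.exp (u * f x) := by
      funext x
      rw [hsq x]
    rw [e1, e2, integral_const_mul] at hLSIg
    have hpt : ∀ x, Γ (fun y => Real.exp (u * f y / 2)) x
        ≤ (u/2)^2 * σ^2 * Real.exp (u * f x) := by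
      intro x
      rw [hchain f hf u x]
      have h1 := hΓf x
      have h2 := hΓpos f x
      have h3 := Real.exp_pos (u * f x)
      nlinarith [mul_le_mul_of_nonneg_left h1 (mul_nonneg (sq_nonneg (u/2)) h3.le)]
    have hΓint : (∫ x, Γ (fun y => Real.exp (u * f y / 2)) x ∂μ)
        ≤ (u/2)^2 * σ^2 * (∫ x, Real.exp (u * f x) ∂μ) := by
      by_cases hGi : Integrable (fun x => Γ (fun y => Real.exp (u * f y / 2)) x) μ
      · have h0 := integral_mono hGi ((hboot u hu).const_mul ((u/2)^2 * σ^2)) hpt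
        rwa [integral_const_mul] at h0
      · rw [integral_undef hGi]
        apply mul_nonneg (by positivity)
        apply integral_nonneg
        intro x
        positivity
    have hfin : 2 * C * (∫ x, Γ (fun y => Real.exp (u * f y / 2)) x ∂μ)
        ≤ (C * σ ^ 2 / 2) * u ^ 2 * (∫ x, Real.exp (u * f x) ∂μ) := by
      have h0 := mul_le_mul_of_nonneg_left hΓint (by positivity : (0:ℝ) ≤ 2 * C)
      have e3 : 2 * C * ((u/2)^2 * σ^2 * (∫ x, Real.exp (u * f x) ∂μ))
          = (C * σ ^ 2 / 2) * u ^ 2 * (∫ x, Real.exp (u * f x) ∂μ) := by ring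
      rw [e3] at h0
      exact h0
    linarith
  have hc2 : (0:ℝ) < C * σ ^ 2 / 2 := by positivity
  have hmom := herbst_moment (μ := μ) f hfmeas hfint hc2 hboot hentII
  -- Chernoff
  rcases eq_or_lt_of_le ht with h0 | htpos
  · rw [← h0]
    have h1 : -((0:ℝ) ^ 2) / (2 * C * σ ^ 2) = 0 := by norm_num
    rw [h1, Real.exp_zero]
    calc μ {x | (∫ y, f y ∂μ) + 0 ≤ f x} ≤ 1 := prob_le_one
      _ = ENNReal.ofReal 1 := by simp
  · set l : ℝ := t / (C * σ ^ 2) with hl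
    have hlpos : 0 < l := by rw [hl]; positivity
    have hcher := ProbabilityTheory.measure_ge_le_exp_mul_mgf (X := f) (μ := μ) (t := l)
      ((∫ y, f y ∂μ) + t) hlpos.le (hboot l hlpos)
    have hmgf : ProbabilityTheory.mgf f μ l = ∫ x, Real.exp (l * f x) ∂μ := rfl
    rw [hmgf] at hcher
    have hHb := hmom l hlpos
    have hchain2 : (μ {x | (∫ y, f y ∂μ) + t ≤ f x}).toReal
        ≤ Real.exp (-(t ^ 2) / (2 * C * σ ^ 2)) := by
      calc (μ {x | (∫ y, f y ∂μ) + t ≤ f x}).toReal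
          ≤ Real.exp (-l * ((∫ y, f y ∂μ) + t)) * (∫ x, Real.exp (l * f x) ∂μ) := hcher
        _ ≤ Real.exp (-l * ((∫ y, f y ∂μ) + t))
            * Real.exp (l * (∫ x, f x ∂μ) + (C * σ ^ 2 / 2) * l ^ 2) := by
            apply mul_le_mul_of_nonneg_left hHb (Real.exp_pos _).le
        _ = Real.exp (-l * ((∫ y, f y ∂μ) + t)
            + (l * (∫ x, f x ∂μ) + (C * σ ^ 2 / 2) * l ^ 2)) := by
            rw [← Real.exp_add]
        _ = Real.exp (-(t ^ 2) / (2 * C * σ ^ 2)) := by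
            congr 1
            rw [hl]
            field_simp
            ring
    calc μ {x | (∫ y, f y ∂μ) + t ≤ f x}
        = ENNReal.ofReal ((μ {x | (∫ y, f y ∂μ) + t ≤ f x}).toReal) :=
          (ENNReal.ofReal_toReal (measure_ne_top μ _)).symm
      _ ≤ ENNReal.ofReal (Real.exp (-(t ^ 2) / (2 * C * σ ^ 2))) :=
          ENNReal.ofReal_le_ofReal hchain2
end
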